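/- arXiv:physics/0511075 — 2 statements merged into one kernel-verified Lean document; each statement's English description precedes it below -/
import Mathlib

section
/- Let N ≥ 1, let φ₁, ..., φ_N be an orthonormal family in H with each φ_j ∈ D(A), and let u ∈ V. Then the trace of the linearized sabra operator satisfies Σ_{j=1}^N [ -ν ‖φ_j‖² - Re (B(φ_j, u), φ_j) ] ≤ -ν k₀² λ² (λ^{2N} - 1)/(λ² - 1) + C₁ N ‖u‖, where C₁ = |a|(λ^{-1} + λ) + |b|(λ^{-1} + 1). (The key points are the lower bound Σ_{j=1}^N ‖φ_j‖² ≥ Σ_{j=1}^N k_j² = k₀²λ²(λ^{2N}-1)/(λ²-1) for any orthonormal family, and the bound |(B(φ_j, u), φ_j)| ≤ C₁ ‖u‖.) -/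
open scoped BigOperators
open MeasureTheory Filter Topology

noncomputable section

namespace Sabra

/-- Wavenumber of the shell with 0-based index `n` (paper index `n+1`): `k₀ λ^(n+1)`. -/
def kwav (k0 lam : ℝ) (n : ℕ) : ℝ := k0 * lam ^ (n + 1)

/-- Wavenumber for an integer paper index `j`: `k₀ λ^j`. -/
def kz (k0 lam : ℝ) (j : ℤ) : ℝ := k0 * lam ^ j

/-- Extend a sequence `(u₁, u₂, …)` (stored at 0-based indices `0,1,…`) to integer paper
indices, with the convention `u_j = 0` for `j ≤ 0`. -/
def extz (u : ℕ → ℂ) (j : ℤ) : ℂ := if 0 < j then u (j.toNat - 1) else 0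

/-- The sabra shell model bilinear map `B(u,v)`, componentwise: the component with 0-based
index `m` corresponds to the paper index `n = m+1`, and equals
`-i (a k_{n+1} v_{n+2} u*_{n+1} + b k_n v_{n+1} u*_{n-1} + a k_{n-1} u_{n-1} v_{n-2}
  + b k_{n-1} v_{n-1} u_{n-2})`. -/
def sabraB (a b k0 lam : ℝ) (u v : ℕ → ℂ) : ℕ → ℂ := fun m =>
  -Complex.I *
    ((a : ℂ) * (kz k0 lam ((m : ℤ) + 2) : ℂ) * extz v ((m : ℤ) + 3)
        * starRingEnd ℂ (extz u ((m : ℤ) + 2))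
      + (b : ℂ) * (kz k0 lam ((m : ℤ) + 1) : ℂ) * extz v ((m : ℤ) + 2)
        * starRingEnd ℂ (extz u (m : ℤ))
      + (a : ℂ) * (kz k0 lam (m : ℤ) : ℂ) * extz u (m : ℤ) * extz v ((m : ℤ) - 1)
      + (b : ℂ) * (kz k0 lam (m : ℤ) : ℂ) * extz v (m : ℤ) * extz u ((m : ℤ) - 1))

/-- The inner product of `H = ℓ²`: `(u,v) = Σ uₙ vₙ*`. -/
def Hinner (u v : ℕ → ℂ) : ℂ := ∑' n, u n * starRingEnd ℂ (v n)

/-- The norm of `H = ℓ²`. -/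
def Hnorm (u : ℕ → ℂ) : ℝ := Real.sqrt (∑' n, ‖u n‖ ^ 2)

/-- Membership in `H = ℓ²`. -/
def memH (u : ℕ → ℂ) : Prop := Summable (fun n => ‖u n‖ ^ 2)

/-- The norm of `V = D(A^{1/2})`: `‖u‖ = (Σ kₙ² |uₙ|²)^{1/2}`. -/
def Vnorm (k0 lam : ℝ) (u : ℕ → ℂ) : ℝ :=
  Real.sqrt (∑' n, kwav k0 lam n ^ 2 * ‖u n‖ ^ 2)

/-- Membership in `V = D(A^{1/2})`. -/
def memV (k0 lam : ℝ) (u : ℕ → ℂ) : Prop :=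
  Summable (fun n => kwav k0 lam n ^ 2 * ‖u n‖ ^ 2)

/-- The graph norm of `D(A)`: `|Au| = (Σ kₙ⁴ |uₙ|²)^{1/2}`. -/
def DAnorm (k0 lam : ℝ) (u : ℕ → ℂ) : ℝ :=
  Real.sqrt (∑' n, kwav k0 lam n ^ 4 * ‖u n‖ ^ 2)

/-- Membership in `D(A)`. -/
def memDA (k0 lam : ℝ) (u : ℕ → ℂ) : Prop :=
  Summable (fun n => kwav k0 lam n ^ 4 * ‖u n‖ ^ 2)

/-- The dual norm of `V' = D(A^{-1/2})` (for an element of `V'` represented as a sequence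
via the `H`-pairing): `(Σ kₙ⁻² |uₙ|²)^{1/2}`. -/
def VdualNorm (k0 lam : ℝ) (u : ℕ → ℂ) : ℝ :=
  Real.sqrt (∑' n, ‖u n‖ ^ 2 / kwav k0 lam n ^ 2)

/-- The pairing `⟨Au, v⟩ = ((u,v)) = Σ kₙ² uₙ vₙ*`. -/
def Aform (k0 lam : ℝ) (u v : ℕ → ℂ) : ℂ :=
  ∑' n, ((kwav k0 lam n ^ 2 : ℝ) : ℂ) * u n * starRingEnd ℂ (v n)

/-- The constant `C₁ = |a|(λ⁻¹ + λ) + |b|(λ⁻¹ + 1)`. -/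
def C1 (a b lam : ℝ) : ℝ := |a| * (lam⁻¹ + lam) + |b| * (lam⁻¹ + 1)

/-- The Gevrey norm `‖u‖_{G^{p,q}_τ} = (Σ e^{2τ kₙᵖ} kₙ^{2q} |uₙ|²)^{1/2}`. -/
def Gnorm (k0 lam p q τ : ℝ) (u : ℕ → ℂ) : ℝ :=
  Real.sqrt (∑' n, Real.exp (2 * τ * kwav k0 lam n ^ p) * kwav k0 lam n ^ (2 * q) * ‖u n‖ ^ 2)

/-- Membership in the Gevrey class `G^{p,q}_τ`. -/
def memG (k0 lam p q τ : ℝ) (u : ℕ → ℂ) : Prop :=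
  Summable (fun n => Real.exp (2 * τ * kwav k0 lam n ^ p) * kwav k0 lam n ^ (2 * q) * ‖u n‖ ^ 2)

/-- `u : ℝ → (ℕ → ℂ)` is a weak solution of the sabra shell model on `[0,T]` with force `f`
and initial datum `uin`: `u(0) = uin`, `u ∈ L^∞([0,T];H) ∩ L²([0,T];V)`, `u ∈ C([0,T];H)`,
and for every `φ ∈ V` and a.e. `t`, `d/dt (u,φ) + ν⟨Au,φ⟩ + ⟨B(u,u),φ⟩ = ⟨f,φ⟩`. -/
def IsWeakSolutionOn (ν a b k0 lam T : ℝ) (f : ℝ → ℕ → ℂ) (uin : ℕ → ℂ)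
    (u : ℝ → ℕ → ℂ) : Prop :=
  u 0 = uin ∧
  (∀ t ∈ Set.Icc (0 : ℝ) T, memH (u t)) ∧
  (∃ M, ∀ t ∈ Set.Icc (0 : ℝ) T, Hnorm (u t) ≤ M) ∧
  IntegrableOn (fun t => Vnorm k0 lam (u t) ^ 2) (Set.Icc (0 : ℝ) T) ∧
  (∀ φ, memV k0 lam φ →
    ∀ᵐ t ∂(volume.restrict (Set.Ioo (0 : ℝ) T)),
      HasDerivAt (fun s => Hinner (u s) φ)
        (Hinner (f t) φ - (ν : ℂ) * Aform k0 lam (u t) φ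
          - Hinner (sabraB a b k0 lam (u t) (u t)) φ) t) ∧
  (∀ t₀ ∈ Set.Icc (0 : ℝ) T,
    Tendsto (fun t => Hnorm (fun n => u t n - u t₀ n))
      (nhdsWithin t₀ (Set.Icc (0 : ℝ) T)) (nhds 0))

/-- `u : ℝ → (ℕ → ℂ)` is a weak solution of the sabra shell model on `[0,∞)`. -/
def IsWeakSolution (ν a b k0 lam : ℝ) (f : ℝ → ℕ → ℂ) (uin : ℕ → ℂ)
    (u : ℝ → ℕ → ℂ) : Prop :=
  u 0 = uin ∧
  (∀ t, 0 ≤ t → memH (u t)) ∧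
  (∀ T > (0 : ℝ), ∃ M, ∀ t ∈ Set.Icc (0 : ℝ) T, Hnorm (u t) ≤ M) ∧
  (∀ T > (0 : ℝ), IntegrableOn (fun t => Vnorm k0 lam (u t) ^ 2) (Set.Icc (0 : ℝ) T)) ∧
  (∀ φ, memV k0 lam φ →
    ∀ᵐ t ∂(volume.restrict (Set.Ioi (0 : ℝ))),
      HasDerivAt (fun s => Hinner (u s) φ)
        (Hinner (f t) φ - (ν : ℂ) * Aform k0 lam (u t) φ
          - Hinner (sabraB a b k0 lam (u t) (u t)) φ) t) ∧
  (∀ t₀ ∈ Set.Ici (0 : ℝ),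
    Tendsto (fun t => Hnorm (fun n => u t n - u t₀ n))
      (nhdsWithin t₀ (Set.Ici (0 : ℝ))) (nhds 0))

/-- The orthogonal projection onto the span of the first `m` canonical basis vectors. -/
def proj (m : ℕ) (u : ℕ → ℂ) : ℕ → ℂ := fun n => if n < m then u n else 0

/-- The `j`-th shell component in paper (1-based) indexing, with `u_0 = 0`. -/
def shellComp (u : ℕ → ℂ) (j : ℕ) : ℂ := if j = 0 then 0 else u (j - 1)

section Helpers
open scoped NNReal ENNReal
variable {a b k0 lam : ℝ}

lemma kwav_pos (hk0 : 0 < k0) (hlam : 1 < lam) (n : ℕ) : 0 < kwav k0 lam n :=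
  mul_pos hk0 (pow_pos (lt_trans one_pos hlam) _)

lemma kwav_mono (hk0 : 0 < k0) (hlam : 1 < lam) {m n : ℕ} (h : m ≤ n) :
    kwav k0 lam m ≤ kwav k0 lam n := by
  unfold kwav
  exact mul_le_mul_of_nonneg_left (pow_le_pow_right₀ (le_of_lt hlam) (by omega)) hk0.le

lemma memV_of_memDA (hk0 : 0 < k0) (hlam : 1 < lam) {u : ℕ → ℂ}
    (h : memDA k0 lam u) : memV k0 lam u := by
  have hkl : 0 < k0 * lam := mul_pos hk0 (lt_trans one_pos hlam)
  refine Summable.of_nonneg_of_le (fun n => by positivity) (fun n => ?_)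
    (h.mul_left ((k0 * lam)^2)⁻¹)
  have h1 : k0 * lam ≤ kwav k0 lam n := by
    unfold kwav
    calc k0 * lam = k0 * lam ^ 1 := by ring
    _ ≤ k0 * lam ^ (n+1) := mul_le_mul_of_nonneg_left
        (pow_le_pow_right₀ hlam.le (by omega)) hk0.le
  have hkn : 0 < kwav k0 lam n := kwav_pos hk0 hlam n
  have : kwav k0 lam n ^ 2 ≤ ((k0*lam)^2)⁻¹ * kwav k0 lam n ^ 4 := by
    calc kwav k0 lam n ^ 2 = kwav k0 lam n ^ 4 / kwav k0 lam n ^2 := by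
          field_simp
      _ ≤ kwav k0 lam n ^ 4 / (k0*lam)^2 := by
          apply div_le_div_of_nonneg_left (by positivity) (by positivity)
          exact pow_le_pow_left₀ hkl.le h1 2
      _ = ((k0*lam)^2)⁻¹ * kwav k0 lam n ^ 4 := by ring
  calc kwav k0 lam n ^ 2 * ‖u n‖^2 ≤ (((k0*lam)^2)⁻¹ * kwav k0 lam n ^ 4) * ‖u n‖^2 :=
        mul_le_mul_of_nonneg_right this (by positivity)
    _ = ((k0*lam)^2)⁻¹ * (kwav k0 lam n ^ 4 * ‖u n‖^2) := by ring

lemma Vnorm_comp_le (hk0 : 0 < k0) (hlam : 1 < lam) {u : ℕ → ℂ}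
    (hu : memV k0 lam u) (n : ℕ) : kwav k0 lam n * ‖u n‖ ≤ Vnorm k0 lam u := by
  have h0 : (0:ℝ) ≤ kwav k0 lam n * ‖u n‖ := by
    have := kwav_pos hk0 hlam n; positivity
  rw [Vnorm, Real.le_sqrt h0 (tsum_nonneg (fun i => by positivity))]
  rw [mul_pow]
  exact Summable.le_tsum hu n (fun i _ => by positivity)

lemma Vnorm_sq (k0 lam : ℝ) (u : ℕ → ℂ) :
    Vnorm k0 lam u ^ 2 = ∑' n, kwav k0 lam n ^ 2 * ‖u n‖ ^ 2 :=
  Real.sq_sqrt (tsum_nonneg (fun i => by positivity))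

lemma Hinner_self (u : ℕ → ℂ) (h : Hinner u u = 1) :
    Summable (fun n => ‖u n‖^2) ∧ ∑' n, ‖u n‖^2 = 1 := by
  have hre : ∀ n, u n * starRingEnd ℂ (u n) = ((‖u n‖^2 : ℝ) : ℂ) := by
    intro n
    rw [Complex.mul_conj, Complex.normSq_eq_norm_sq]
  rw [Hinner] at h
  simp only [hre] at h
  have hs : Summable (fun n => ‖u n‖^2) := by
    by_contra hns
    rw [tsum_eq_zero_of_not_summable (fun hc => hns (Complex.summable_ofReal.mp hc))] at h
    exact zero_ne_one h
  refine ⟨hs, ?_⟩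
  rw [← Complex.ofReal_tsum] at h
  exact_mod_cast h

lemma bessel {N : ℕ} (φ : Fin N → ℕ → ℂ)
    (horth : ∀ i j, Hinner (φ i) (φ j) = if i = j then 1 else 0) (n : ℕ) :
    ∑ j : Fin N, ‖φ j n‖^2 ≤ 1 := by
  have hsum : ∀ j, Summable (fun n => ‖φ j n‖^2) := by
    intro j
    exact (Hinner_self (φ j) (by simpa using horth j j)).1
  have hmem : ∀ j, Memℓp (φ j) 2 := by
    intro j
    apply memℓp_gen
    have : (fun n => ‖φ j n‖ ^ ((2:ℝ≥0∞)).toReal) = fun n => ‖φ j n‖^2 := by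
      ext m
      rw [show ((2:ℝ≥0∞)).toReal = (2:ℝ) by norm_num, Real.rpow_two]
    rw [this]
    exact hsum j
  set Φ : Fin N → lp (fun _ : ℕ => ℂ) 2 := fun j => ⟨φ j, hmem j⟩ with hΦ
  have honb : Orthonormal ℂ Φ := by
    rw [orthonormal_iff_ite]
    intro i j
    have : (inner ℂ (Φ i) (Φ j) : ℂ) = ∑' m, starRingEnd ℂ (φ i m) * φ j m := by
      rw [lp.inner_eq_tsum]
      exact tsum_congr fun m => RCLike.inner_apply' _ _
    rw [this]
    have h := horth i j
    rw [Hinner] at h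
    calc ∑' m, starRingEnd ℂ (φ i m) * φ j m
        = star (∑' m, φ i m * starRingEnd ℂ (φ j m)) := by
          rw [tsum_star]
          congr 1
          ext m
          simp only [star_mul', RCLike.star_def, Complex.conj_conj]
      _ = if i = j then 1 else 0 := by rw [h]; split_ifs <;> simp
  have hx : ‖lp.single (E := fun _ : ℕ => ℂ) 2 n (1:ℂ)‖ = 1 := by
    have := lp.norm_single (E := fun _ : ℕ => ℂ) (p := 2) (by norm_num)
      n (1:ℂ)
    simpa using this
  have hB := honb.sum_inner_products_le (s := Finset.univ)
    (lp.single (E := fun _ : ℕ => ℂ) 2 n (1:ℂ))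
  rw [hx] at hB
  simp only [one_pow] at hB
  refine le_trans (le_of_eq ?_) hB
  apply Finset.sum_congr rfl
  intro j _
  have : (inner ℂ (Φ j) (lp.single (E := fun _ : ℕ => ℂ) 2 n (1:ℂ)) : ℂ)
      = starRingEnd ℂ (φ j n) := by
    rw [lp.inner_single_right]
    simp [RCLike.inner_apply]
    rfl
  rw [this]
  simp

lemma traceA (hk0 : 0 < k0) (hlam : 1 < lam) {N : ℕ} (φ : Fin N → ℕ → ℂ)
    (hV : ∀ j, memV k0 lam (φ j))
    (hsum1 : ∀ j, Summable (fun n => ‖φ j n‖^2) ∧ ∑' n, ‖φ j n‖^2 = 1)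
    (hbess : ∀ n, ∑ j : Fin N, ‖φ j n‖^2 ≤ 1) :
    ∑ m ∈ Finset.range N, kwav k0 lam m ^ 2 ≤ ∑ j : Fin N, Vnorm k0 lam (φ j)^2 := by
  set s : ℕ → ℝ := fun n => ∑ j : Fin N, ‖φ j n‖^2 with hs_def
  have hs_nonneg : ∀ n, 0 ≤ s n := fun n => Finset.sum_nonneg (fun j _ => by positivity)
  have hs_sum : Summable s := summable_sum (fun j _ => (hsum1 j).1)
  have hts : ∑' n, s n = N := by
    rw [hs_def, Summable.tsum_finsetSum (fun j _ => (hsum1 j).1),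
      Finset.sum_congr rfl (fun j _ => (hsum1 j).2)]
    simp
  have hSfun : (fun n => kwav k0 lam n ^ 2 * s n)
      = fun n => ∑ j : Fin N, kwav k0 lam n ^ 2 * ‖φ j n‖^2 := by
    ext n; rw [hs_def]; exact Finset.mul_sum _ _ _
  have hS : Summable (fun n => kwav k0 lam n ^ 2 * s n) := by
    rw [hSfun]; exact summable_sum (fun j _ => hV j)
  have hRHS : ∑ j : Fin N, Vnorm k0 lam (φ j)^2 = ∑' n, kwav k0 lam n ^ 2 * s n := by
    rw [hSfun, Summable.tsum_finsetSum (fun j _ => hV j)]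
    exact Finset.sum_congr rfl (fun j _ => Vnorm_sq k0 lam (φ j))
  rw [hRHS]
  set κ := kwav k0 lam N ^ 2 with hκ
  have hsub : Summable (fun n => (kwav k0 lam n ^ 2 - κ) * s n) := by
    have : (fun n => (kwav k0 lam n ^ 2 - κ) * s n)
        = fun n => kwav k0 lam n ^ 2 * s n - κ * s n := by ext n; ring
    rw [this]; exact hS.sub (hs_sum.mul_left κ)
  have hsplit : ∑' n, kwav k0 lam n ^ 2 * s n
      = κ * N + ∑' n, (kwav k0 lam n ^ 2 - κ) * s n := by
    have : ∀ n, kwav k0 lam n ^ 2 * s n = κ * s n + (kwav k0 lam n ^ 2 - κ) * s n := by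
      intro n; ring
    rw [tsum_congr this, Summable.tsum_add (hs_sum.mul_left κ) hsub, tsum_mul_left, hts]
  rw [hsplit]
  have h1 : ∑ n ∈ Finset.range N, (kwav k0 lam n ^ 2 - κ) * s n
      ≤ ∑' n, (kwav k0 lam n ^ 2 - κ) * s n := by
    apply Summable.sum_le_tsum _ _ hsub
    intro n hn
    have hn' : N ≤ n := by simpa using hn
    have : κ ≤ kwav k0 lam n ^ 2 := by
      apply pow_le_pow_left₀ (kwav_pos hk0 hlam N).le (kwav_mono hk0 hlam hn')
    exact mul_nonneg (by linarith) (hs_nonneg n)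
  have h2 : ∑ n ∈ Finset.range N, (kwav k0 lam n ^ 2 - κ)
      ≤ ∑ n ∈ Finset.range N, (kwav k0 lam n ^ 2 - κ) * s n := by
    apply Finset.sum_le_sum
    intro n hn
    have hn' : n ≤ N := by simp at hn; omega
    have hc : kwav k0 lam n ^ 2 - κ ≤ 0 := by
      have : kwav k0 lam n ^ 2 ≤ κ := by
        apply pow_le_pow_left₀ (kwav_pos hk0 hlam n).le (kwav_mono hk0 hlam hn')
      linarith
    calc kwav k0 lam n ^ 2 - κ = (kwav k0 lam n ^ 2 - κ) * 1 := by ring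
      _ ≤ (kwav k0 lam n ^ 2 - κ) * s n := mul_le_mul_of_nonpos_left (hbess n) hc
  have := le_trans h2 h1
  have hfinal : ∑ n ∈ Finset.range N, kwav k0 lam n ^ 2
      = κ * N + ∑ n ∈ Finset.range N, (kwav k0 lam n ^ 2 - κ) := by
    rw [Finset.sum_sub_distrib]
    simp [Finset.card_range]
    ring
  linarith

lemma geom_kwav (hk0 : 0 < k0) (hlam : 1 < lam) (N : ℕ) :
    ∑ m ∈ Finset.range N, kwav k0 lam m ^ 2
      = k0 ^ 2 * lam ^ 2 * (lam ^ (2 * N) - 1) / (lam ^ 2 - 1) := by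
  have hne : lam ^ 2 ≠ 1 := by nlinarith
  have : ∀ m, kwav k0 lam m ^ 2 = k0 ^ 2 * lam ^ 2 * (lam ^ 2) ^ m := by
    intro m
    rw [kwav, mul_pow, ← pow_mul, show (m+1)*2 = 2 + 2*m by ring, pow_add, pow_mul]
    ring
  rw [Finset.sum_congr rfl (fun m _ => this m), ← Finset.mul_sum, geom_sum_eq hne,
    ← pow_mul]
  ring

lemma extz_succ (w : ℕ → ℂ) (m : ℕ) : extz w ((m : ℤ) + 1) = w m := by
  rw [extz, if_pos (by omega)]
  congr 1

lemma extz_nonpos (w : ℕ → ℂ) {j : ℤ} (h : j ≤ 0) : extz w j = 0 := if_neg (by omega)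

lemma kz_nat (m : ℕ) : kz k0 lam (m : ℤ) = k0 * lam ^ m := by
  rw [kz, zpow_natCast]

lemma kz_pos (hk0 : 0 < k0) (hlam : 1 < lam) (j : ℤ) : 0 < kz k0 lam j :=
  mul_pos hk0 (zpow_pos (by linarith) _)

lemma prod_sum_le {p q : ℕ → ℝ} (hp : ∀ m, 0 ≤ p m) (hq : ∀ m, 0 ≤ q m)
    (hps : Summable (fun m => p m ^ 2)) (hqs : Summable (fun m => q m ^ 2))
    (hpt : ∑' m, p m ^ 2 ≤ 1) (hqt : ∑' m, q m ^ 2 ≤ 1) :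
    Summable (fun m => p m * q m) ∧ ∑' m, p m * q m ≤ 1 := by
  have hmaj : ∀ m, p m * q m ≤ (p m ^ 2 + q m ^ 2) * 2⁻¹ := fun m => by
    nlinarith [sq_nonneg (p m - q m)]
  have hms : Summable (fun m => (p m ^ 2 + q m ^ 2) * 2⁻¹) := (hps.add hqs).mul_right _
  have hs : Summable (fun m => p m * q m) :=
    Summable.of_nonneg_of_le (fun m => mul_nonneg (hp m) (hq m)) hmaj hms
  refine ⟨hs, ?_⟩
  calc ∑' m, p m * q m ≤ ∑' m, (p m ^ 2 + q m ^ 2) * 2⁻¹ := Summable.tsum_le_tsum hmaj hs hms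
    _ = (∑' m, p m ^ 2 + ∑' m, q m ^ 2) * 2⁻¹ := by rw [tsum_mul_right, Summable.tsum_add hps hqs]
    _ ≤ 1 := by linarith

set_option maxHeartbeats 1000000 in
lemma nonlinear_bound (hk0 : 0 < k0) (hlam : 1 < lam) (φ u : ℕ → ℂ)
    (hφ : Summable (fun n => ‖φ n‖ ^ 2)) (hφ1 : ∑' n, ‖φ n‖ ^ 2 = 1)
    (hu : memV k0 lam u) :
    |(Hinner (sabraB a b k0 lam φ u) φ).re| ≤ C1 a b lam * Vnorm k0 lam u := by
  have hlam0 : 0 < lam := by linarith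
  have hlaminv : 0 ≤ lam⁻¹ := by positivity
  set U := Vnorm k0 lam u with hUdef
  have hU0 : 0 ≤ U := Real.sqrt_nonneg _
  have hUk : ∀ n, kwav k0 lam n * ‖u n‖ ≤ U := Vnorm_comp_le hk0 hlam hu
  set g : ℕ → ℝ := fun m => ‖φ m‖ with hg
  set e1 : ℕ → ℝ := fun m => ‖extz φ (m : ℤ)‖ with he1
  set e2 : ℕ → ℝ := fun m => ‖extz φ ((m : ℤ) - 1)‖ with he2
  have he1succ : ∀ m : ℕ, e1 (m + 1) = g m := by
    intro m
    rw [he1]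
    show ‖extz φ ((m + 1 : ℕ) : ℤ)‖ = g m
    rw [show ((m + 1 : ℕ) : ℤ) = (m : ℤ) + 1 by push_cast; ring, extz_succ]
  have he10 : e1 0 = 0 := by rw [he1]; show ‖extz φ ((0:ℕ) : ℤ)‖ = 0; rw [extz_nonpos φ (by norm_num)]; simp
  have he2succ : ∀ m : ℕ, e2 (m + 2) = g m := by
    intro m
    rw [he2]
    show ‖extz φ (((m + 2 : ℕ) : ℤ) - 1)‖ = g m
    rw [show ((m + 2 : ℕ) : ℤ) - 1 = (m : ℤ) + 1 by push_cast; ring, extz_succ]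
  have he20 : e2 0 = 0 := by rw [he2]; show ‖extz φ (((0:ℕ):ℤ) - 1)‖ = 0; rw [extz_nonpos φ (by norm_num)]; simp
  have he21 : e2 1 = 0 := by rw [he2]; show ‖extz φ (((1:ℕ):ℤ) - 1)‖ = 0; rw [extz_nonpos φ (by norm_num)]; simp
  -- bounds on the kz * u factors
  have hb1 : ∀ m : ℕ, kz k0 lam ((m : ℤ) + 2) * ‖extz u ((m : ℤ) + 3)‖ ≤ lam⁻¹ * U := by
    intro m
    rw [show (m : ℤ) + 3 = ((m + 2 : ℕ) : ℤ) + 1 by push_cast; ring, extz_succ,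
      show (m : ℤ) + 2 = ((m + 2 : ℕ) : ℤ) by push_cast; ring, kz_nat]
    have : k0 * lam ^ (m + 2) = lam⁻¹ * kwav k0 lam (m + 2) := by
      rw [kwav]
      field_simp
      ring
    rw [this, mul_assoc]
    exact mul_le_mul_of_nonneg_left (hUk (m + 2)) hlaminv
  have hb2 : ∀ m : ℕ, kz k0 lam ((m : ℤ) + 1) * ‖extz u ((m : ℤ) + 2)‖ ≤ lam⁻¹ * U := by
    intro m
    rw [show (m : ℤ) + 2 = ((m + 1 : ℕ) : ℤ) + 1 by push_cast; ring, extz_succ,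
      show (m : ℤ) + 1 = ((m + 1 : ℕ) : ℤ) by push_cast; ring, kz_nat]
    have : k0 * lam ^ (m + 1) = lam⁻¹ * kwav k0 lam (m + 1) := by
      rw [kwav]; field_simp; ring
    rw [this, mul_assoc]
    exact mul_le_mul_of_nonneg_left (hUk (m + 1)) hlaminv
  have hb3 : ∀ m : ℕ, kz k0 lam (m : ℤ) * ‖extz u ((m : ℤ) - 1)‖ ≤ lam * U := by
    intro m
    match m with
    | 0 => rw [extz_nonpos u (by norm_num)]; simp; positivity
    | 1 => rw [extz_nonpos u (by norm_num)]; simp; positivity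
    | (m + 2) =>
      rw [show (((m + 2 : ℕ) : ℤ)) - 1 = ((m : ℤ)) + 1 by push_cast; ring, extz_succ, kz_nat]
      have : k0 * lam ^ (m + 2) = lam * kwav k0 lam m := by
        rw [kwav]; ring
      rw [this, mul_assoc]
      exact mul_le_mul_of_nonneg_left (hUk m) hlam0.le
  have hb4 : ∀ m : ℕ, kz k0 lam (m : ℤ) * ‖extz u (m : ℤ)‖ ≤ U := by
    intro m
    match m with
    | 0 => rw [extz_nonpos u (by norm_num)]; simpa using hU0
    | (m + 1) =>
      rw [kz_nat, show (((m + 1 : ℕ) : ℤ)) = ((m : ℤ)) + 1 by push_cast; ring, extz_succ]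
      exact hUk m
  -- pointwise bound
  set h : ℕ → ℝ := fun m =>
    (|a| * lam⁻¹) * (g (m + 1) * g m) + (|b| * lam⁻¹) * (e1 m * g m)
      + (|a| * lam) * (e1 m * g m) + |b| * (e2 m * g m) with hh_def
  have hpt : ∀ m, ‖sabraB a b k0 lam φ u m * starRingEnd ℂ (φ m)‖ ≤ U * h m := by
    intro m
    rw [sabraB]
    have hnorm : ∀ z : ℂ, ‖-Complex.I * z * starRingEnd ℂ (φ m)‖ = ‖z‖ * g m := by
      intro z
      rw [norm_mul, norm_mul, norm_neg, Complex.norm_I, one_mul, RCLike.norm_conj]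
    rw [hnorm]
    have t1 : ‖(a : ℂ) * (kz k0 lam ((m : ℤ) + 2) : ℂ) * extz u ((m : ℤ) + 3)
        * starRingEnd ℂ (extz φ ((m : ℤ) + 2))‖ ≤ |a| * (lam⁻¹ * U) * g (m + 1) := by
      rw [norm_mul, norm_mul, norm_mul, RCLike.norm_conj, Complex.norm_real,
        Real.norm_eq_abs, Complex.norm_real, Real.norm_eq_abs,
        abs_of_pos (kz_pos hk0 hlam _),
        show (m : ℤ) + 2 = ((m + 1 : ℕ) : ℤ) + 1 by push_cast; ring, extz_succ]
      calc |a| * kz k0 lam ((m : ℤ) + 2) * ‖extz u ((m : ℤ) + 3)‖ * ‖φ (m + 1)‖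
          = |a| * (kz k0 lam ((m : ℤ) + 2) * ‖extz u ((m : ℤ) + 3)‖) * g (m + 1) := by
            rw [hg]; ring
        _ ≤ |a| * (lam⁻¹ * U) * g (m + 1) := by
            apply mul_le_mul_of_nonneg_right _ (by rw [hg]; positivity)
            exact mul_le_mul_of_nonneg_left (hb1 m) (abs_nonneg a)
    have t2 : ‖(b : ℂ) * (kz k0 lam ((m : ℤ) + 1) : ℂ) * extz u ((m : ℤ) + 2)
        * starRingEnd ℂ (extz φ (m : ℤ))‖ ≤ |b| * (lam⁻¹ * U) * e1 m := by
      rw [norm_mul, norm_mul, norm_mul, RCLike.norm_conj, Complex.norm_real,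
        Real.norm_eq_abs, Complex.norm_real, Real.norm_eq_abs,
        abs_of_pos (kz_pos hk0 hlam _)]
      calc |b| * kz k0 lam ((m : ℤ) + 1) * ‖extz u ((m : ℤ) + 2)‖ * ‖extz φ (m : ℤ)‖
          = |b| * (kz k0 lam ((m : ℤ) + 1) * ‖extz u ((m : ℤ) + 2)‖) * e1 m := by
            rw [he1]; ring
        _ ≤ |b| * (lam⁻¹ * U) * e1 m := by
            apply mul_le_mul_of_nonneg_right _ (by rw [he1]; positivity)
            exact mul_le_mul_of_nonneg_left (hb2 m) (abs_nonneg b)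
    have t3 : ‖(a : ℂ) * (kz k0 lam (m : ℤ) : ℂ) * extz φ (m : ℤ) * extz u ((m : ℤ) - 1)‖
        ≤ |a| * (lam * U) * e1 m := by
      rw [norm_mul, norm_mul, norm_mul, Complex.norm_real,
        Real.norm_eq_abs, Complex.norm_real, Real.norm_eq_abs,
        abs_of_pos (kz_pos hk0 hlam _)]
      calc |a| * kz k0 lam (m : ℤ) * ‖extz φ (m : ℤ)‖ * ‖extz u ((m : ℤ) - 1)‖
          = |a| * (kz k0 lam (m : ℤ) * ‖extz u ((m : ℤ) - 1)‖) * e1 m := by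
            rw [he1]; ring
        _ ≤ |a| * (lam * U) * e1 m := by
            apply mul_le_mul_of_nonneg_right _ (by rw [he1]; positivity)
            exact mul_le_mul_of_nonneg_left (hb3 m) (abs_nonneg a)
    have t4 : ‖(b : ℂ) * (kz k0 lam (m : ℤ) : ℂ) * extz u (m : ℤ) * extz φ ((m : ℤ) - 1)‖
        ≤ |b| * U * e2 m := by
      rw [norm_mul, norm_mul, norm_mul, Complex.norm_real,
        Real.norm_eq_abs, Complex.norm_real, Real.norm_eq_abs,
        abs_of_pos (kz_pos hk0 hlam _)]
      calc |b| * kz k0 lam (m : ℤ) * ‖extz u (m : ℤ)‖ * ‖extz φ ((m : ℤ) - 1)‖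
          = |b| * (kz k0 lam (m : ℤ) * ‖extz u (m : ℤ)‖) * e2 m := by
            rw [he2]; ring
        _ ≤ |b| * U * e2 m := by
            apply mul_le_mul_of_nonneg_right _ (by rw [he2]; positivity)
            exact mul_le_mul_of_nonneg_left (hb4 m) (abs_nonneg b)
    have hgm : (0:ℝ) ≤ g m := norm_nonneg (φ m)
    calc ‖(a : ℂ) * (kz k0 lam ((m : ℤ) + 2) : ℂ) * extz u ((m : ℤ) + 3)
            * starRingEnd ℂ (extz φ ((m : ℤ) + 2))
          + (b : ℂ) * (kz k0 lam ((m : ℤ) + 1) : ℂ) * extz u ((m : ℤ) + 2)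
            * starRingEnd ℂ (extz φ (m : ℤ))
          + (a : ℂ) * (kz k0 lam (m : ℤ) : ℂ) * extz φ (m : ℤ) * extz u ((m : ℤ) - 1)
          + (b : ℂ) * (kz k0 lam (m : ℤ) : ℂ) * extz u (m : ℤ) * extz φ ((m : ℤ) - 1)‖ * g m
        ≤ (‖(a : ℂ) * (kz k0 lam ((m : ℤ) + 2) : ℂ) * extz u ((m : ℤ) + 3)
            * starRingEnd ℂ (extz φ ((m : ℤ) + 2))‖
          + ‖(b : ℂ) * (kz k0 lam ((m : ℤ) + 1) : ℂ) * extz u ((m : ℤ) + 2)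
            * starRingEnd ℂ (extz φ (m : ℤ))‖
          + ‖(a : ℂ) * (kz k0 lam (m : ℤ) : ℂ) * extz φ (m : ℤ) * extz u ((m : ℤ) - 1)‖
          + ‖(b : ℂ) * (kz k0 lam (m : ℤ) : ℂ) * extz u (m : ℤ) * extz φ ((m : ℤ) - 1)‖) * g m :=
          mul_le_mul_of_nonneg_right ((norm_add_le _ _).trans (add_le_add norm_add₃_le le_rfl)) hgm
      _ ≤ (|a| * (lam⁻¹ * U) * g (m + 1) + |b| * (lam⁻¹ * U) * e1 m
            + |a| * (lam * U) * e1 m + |b| * U * e2 m) * g m := by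
          apply mul_le_mul_of_nonneg_right _ hgm
          linarith
      _ = U * h m := by simp only [hh_def]; ring
  -- summability of the shifted square sequences
  have hgnn : ∀ m, 0 ≤ g m := fun m => norm_nonneg (φ m)
  have he1nn : ∀ m, 0 ≤ e1 m := fun m => norm_nonneg _
  have he2nn : ∀ m, 0 ≤ e2 m := fun m => norm_nonneg _
  have hgsq : Summable (fun m => g m ^ 2) := hφ
  have hgsq1 : ∑' m, g m ^ 2 ≤ 1 := le_of_eq hφ1
  have hgshift : Summable (fun m => g (m + 1) ^ 2) := (summable_nat_add_iff 1).mpr hφ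
  have htshift : ∑' m, g (m + 1) ^ 2 ≤ 1 := by
    rw [← hφ1]
    exact Summable.tsum_le_tsum_of_inj (fun m => m + 1) (add_left_injective 1)
      (fun c _ => by positivity) (fun i => le_refl _) hgshift hφ
  have he1fun : (fun m => e1 (m + 1) ^ 2) = fun m => g m ^ 2 :=
    funext fun m => by rw [he1succ]
  have he1sq : Summable (fun m => e1 m ^ 2) :=
    (summable_nat_add_iff 1).mp (he1fun ▸ hφ)
  have he1t : ∑' m, e1 m ^ 2 ≤ 1 := by
    rw [Summable.tsum_eq_zero_add he1sq, he10, he1fun]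
    simpa using hgsq1
  have he2fun : (fun m => e2 (m + 1 + 1) ^ 2) = fun m => g m ^ 2 :=
    funext fun m => by rw [show m + 1 + 1 = m + 2 from rfl, he2succ]
  have he2sq' : Summable (fun m => e2 (m + 1) ^ 2) :=
    (summable_nat_add_iff 1).mp (he2fun ▸ hφ)
  have he2sq : Summable (fun m => e2 m ^ 2) := (summable_nat_add_iff 1).mp he2sq'
  have he2t : ∑' m, e2 m ^ 2 ≤ 1 := by
    rw [Summable.tsum_eq_zero_add he2sq, he20, Summable.tsum_eq_zero_add he2sq', he21, he2fun]
    simpa using hgsq1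
  -- the three product sums
  have P1 := prod_sum_le (fun m => hgnn (m + 1)) hgnn hgshift hgsq htshift hgsq1
  have P2 := prod_sum_le he1nn hgnn he1sq hgsq he1t hgsq1
  have P3 := prod_sum_le he2nn hgnn he2sq hgsq he2t hgsq1
  have hhs : Summable h := by
    simp only [hh_def]
    exact (((P1.1.mul_left _).add (P2.1.mul_left _)).add (P2.1.mul_left _)).add
      (P3.1.mul_left _)
  have hcoef : ∀ (c : ℝ) (S : ℕ → ℝ), 0 ≤ c → Summable S → ∑' m, S m ≤ 1 →
      ∑' m, c * S m ≤ c := by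
    intro c S hc hS hS1
    rw [tsum_mul_left]
    calc c * ∑' m, S m ≤ c * 1 := mul_le_mul_of_nonneg_left hS1 hc
      _ = c := mul_one c
  have htsumh : ∑' m, h m ≤ |a| * lam⁻¹ + (|b| * lam⁻¹ + (|a| * lam + |b|)) := by
    have hre : h = fun m => (|a| * lam⁻¹) * (g (m + 1) * g m)
        + ((|b| * lam⁻¹) * (e1 m * g m)
          + ((|a| * lam) * (e1 m * g m) + |b| * (e2 m * g m))) :=
      funext fun m => by simp only [hh_def]; ring
    rw [hre, Summable.tsum_add (P1.1.mul_left _)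
        ((P2.1.mul_left _).add ((P2.1.mul_left _).add (P3.1.mul_left _))),
      Summable.tsum_add (P2.1.mul_left _) ((P2.1.mul_left _).add (P3.1.mul_left _)),
      Summable.tsum_add (P2.1.mul_left _) (P3.1.mul_left _)]
    have c1 := hcoef (|a| * lam⁻¹) _ (by positivity) P1.1 P1.2
    have c2 := hcoef (|b| * lam⁻¹) _ (by positivity) P2.1 P2.2
    have c3 := hcoef (|a| * lam) _ (by positivity) P2.1 P2.2
    have c4 := hcoef |b| _ (abs_nonneg b) P3.1 P3.2
    linarith
  -- conclusion
  have hT : Summable (fun m => ‖sabraB a b k0 lam φ u m * starRingEnd ℂ (φ m)‖) :=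
    Summable.of_nonneg_of_le (fun m => norm_nonneg _) hpt (hhs.mul_left U)
  calc |(Hinner (sabraB a b k0 lam φ u) φ).re|
      ≤ ‖Hinner (sabraB a b k0 lam φ u) φ‖ := by
        exact Complex.abs_re_le_norm _
    _ ≤ ∑' m, ‖sabraB a b k0 lam φ u m * starRingEnd ℂ (φ m)‖ :=
        norm_tsum_le_tsum_norm hT
    _ ≤ ∑' m, U * h m := Summable.tsum_le_tsum hpt hT (hhs.mul_left U)
    _ = U * ∑' m, h m := tsum_mul_left
    _ ≤ U * (|a| * lam⁻¹ + (|b| * lam⁻¹ + (|a| * lam + |b|))) :=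
        mul_le_mul_of_nonneg_left htsumh hU0
    _ = C1 a b lam * Vnorm k0 lam u := by rw [C1, hUdef]; ring

end Helpers

/-- trace estimate for the linearized sabra operator. For an orthonormal
family `φ₁, …, φ_N ⊂ D(A)` in `H` and `u ∈ V`,
`Σ_{j=1}^N [-ν‖φⱼ‖² - Re (B(φⱼ,u), φⱼ)] ≤ -νk₀²λ²(λ^{2N}-1)/(λ²-1) + C₁N‖u‖`. -/
theorem sabra_trace_estimate
    (a b c ν k0 lam : ℝ) (hk0 : 0 < k0) (hlam : 1 < lam) (hν : 0 < ν)
    (habc : a + b + c = 0)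
    (N : ℕ) (hN : 1 ≤ N)
    (φ : Fin N → ℕ → ℂ) (hφDA : ∀ j, memDA k0 lam (φ j))
    (horth : ∀ i j, Hinner (φ i) (φ j) = if i = j then 1 else 0)
    (u : ℕ → ℂ) (hu : memV k0 lam u) :
    ∑ j : Fin N, (-ν * Vnorm k0 lam (φ j) ^ 2 - (Hinner (sabraB a b k0 lam (φ j) u) (φ j)).re)
      ≤ -ν * k0 ^ 2 * lam ^ 2 * (lam ^ (2 * N) - 1) / (lam ^ 2 - 1)
        + C1 a b lam * N * Vnorm k0 lam u := by
  have hnorm1 : ∀ j, Summable (fun n => ‖φ j n‖ ^ 2) ∧ ∑' n, ‖φ j n‖ ^ 2 = 1 :=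
    fun j => Hinner_self _ (by simpa using horth j j)
  have hbess := bessel φ horth
  have hV : ∀ j, memV k0 lam (φ j) := fun j => memV_of_memDA hk0 hlam (hφDA j)
  have hA := traceA hk0 hlam φ hV hnorm1 hbess
  rw [geom_kwav hk0 hlam N] at hA
  have hB : ∀ j : Fin N, |(Hinner (sabraB a b k0 lam (φ j) u) (φ j)).re|
      ≤ C1 a b lam * Vnorm k0 lam u :=
    fun j => nonlinear_bound hk0 hlam (φ j) u (hnorm1 j).1 (hnorm1 j).2 hu
  have hsum : ∑ j : Fin N, (-ν * Vnorm k0 lam (φ j) ^ 2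
        - (Hinner (sabraB a b k0 lam (φ j) u) (φ j)).re)
      = -(ν * ∑ j : Fin N, Vnorm k0 lam (φ j) ^ 2)
        - ∑ j : Fin N, (Hinner (sabraB a b k0 lam (φ j) u) (φ j)).re := by
    rw [Finset.sum_sub_distrib, ← Finset.mul_sum]
    ring
  rw [hsum]
  have h1 : -(ν * ∑ j : Fin N, Vnorm k0 lam (φ j) ^ 2)
      ≤ -(ν * (k0 ^ 2 * lam ^ 2 * (lam ^ (2 * N) - 1) / (lam ^ 2 - 1))) :=
    neg_le_neg (mul_le_mul_of_nonneg_left hA hν.le)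
  have h2 : -∑ j : Fin N, (Hinner (sabraB a b k0 lam (φ j) u) (φ j)).re
      ≤ C1 a b lam * N * Vnorm k0 lam u := by
    calc -∑ j : Fin N, (Hinner (sabraB a b k0 lam (φ j) u) (φ j)).re
        = ∑ j : Fin N, -(Hinner (sabraB a b k0 lam (φ j) u) (φ j)).re := by
          rw [Finset.sum_neg_distrib]
      _ ≤ ∑ j : Fin N, (C1 a b lam * Vnorm k0 lam u) := by
          apply Finset.sum_le_sum
          intro j _
          exact le_trans (neg_le_abs _) (hB j)
      _ = C1 a b lam * N * Vnorm k0 lam u := by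
          rw [Finset.sum_const, Finset.card_univ, Fintype.card_fin, nsmul_eq_mul]
          ring
  have heq : -ν * k0 ^ 2 * lam ^ 2 * (lam ^ (2 * N) - 1) / (lam ^ 2 - 1)
      = -(ν * (k0 ^ 2 * lam ^ 2 * (lam ^ (2 * N) - 1) / (lam ^ 2 - 1))) := by
    ring
  linarith

end Sabra
end
end

section
/- Let α, β : [0,∞) → ℝ be locally integrable functions such that for some T > 0: liminf_{t→∞} (1/T) ∫_t^{t+T} α(τ) dτ > 0, limsup_{t→∞} (1/T) ∫_t^{t+T} α⁻(τ) dτ < ∞, and lim_{t→∞} (1/T) ∫_t^{t+T} β⁺(τ) dτ = 0, where α⁻(t) = max{-α(t), 0} and β⁺(t) = max{β(t), 0}. Suppose ξ : [0,∞) → [0,∞) is absolutely continuous and satisfies dξ/dt + αξ ≤ β almost everywhere on [0,∞). Then ξ(t) → 0 as t → ∞. -/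
open scoped BigOperators
open MeasureTheory Filter Topology

noncomputable section

namespace Sabra

section GronwallAux

open Set intervalIntegral

/-- `f` is a primitive of `f'` on `[0,∞)`. -/
def IsPrim (f f' : ℝ → ℝ) : Prop :=
  (∀ a b : ℝ, 0 ≤ a → 0 ≤ b → IntervalIntegrable f' volume a b) ∧
  ∀ t : ℝ, 0 ≤ t → f t = f 0 + ∫ s in (0:ℝ)..t, f' s

theorem IsPrim.congr {f f' g g' : ℝ → ℝ} (h : IsPrim f f')
    (hg : ∀ t, f t = g t) (hg' : ∀ t, f' t = g' t) : IsPrim g g' := by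
  have e1 : f = g := funext hg
  have e2 : f' = g' := funext hg'
  rw [← e1, ← e2]; exact h

theorem IsPrim.sub_eq {f f' : ℝ → ℝ} (h : IsPrim f f') {s t : ℝ}
    (hs : 0 ≤ s) (ht : 0 ≤ t) : f t - f s = ∫ τ in s..t, f' τ := by
  have h1 := h.2 s hs
  have h2 := h.2 t ht
  have hadd := integral_add_adjacent_intervals (h.1 0 s le_rfl hs) (h.1 s t hs ht)
  rw [h1, h2]; linarith

theorem IsPrim.continuousOn {f f' : ℝ → ℝ} (h : IsPrim f f') :
    ContinuousOn f (Ici (0:ℝ)) := by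
  intro x hx
  have hx0 : (0:ℝ) ≤ x := hx
  have h1 : ContinuousOn (fun t => f 0 + ∫ s in (0:ℝ)..t, f' s) (Icc 0 (x+1)) := by
    apply continuousOn_const.add
    have := continuousOn_primitive_interval' (h.1 0 (x+1) le_rfl (by linarith))
      (left_mem_uIcc)
    have huIcc : uIcc (0:ℝ) (x+1) = Icc 0 (x+1) := uIcc_of_le (by linarith)
    rwa [huIcc] at this
  have h2 : ContinuousOn f (Icc 0 (x+1)) := by
    apply h1.congr
    intro t htt
    exact h.2 t htt.1
  have h3 : ContinuousWithinAt f (Icc 0 (x+1)) x := h2 x ⟨hx0, by linarith⟩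
  apply h3.mono_of_mem_nhdsWithin
  have : Icc (0:ℝ) (x+1) = Ici 0 ∩ Iic (x+1) := (Ici_inter_Iic).symm
  rw [this]
  exact inter_mem_nhdsWithin _ (Iic_mem_nhds (by linarith))

theorem IsPrim.const_mul {f f' : ℝ → ℝ} (h : IsPrim f f') (c : ℝ) :
    IsPrim (fun t => c * f t) (fun t => c * f' t) := by
  refine ⟨fun a b ha hb => (h.1 a b ha hb).const_mul c, fun t ht => ?_⟩
  simp only [intervalIntegral.integral_const_mul]
  rw [h.2 t ht]; ring

theorem IsPrim.mul {f f' g g' : ℝ → ℝ} (hf : IsPrim f f') (hg : IsPrim g g') :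
    IsPrim (fun t => f t * g t) (fun t => f' t * g t + f t * g' t) := by
  have hfc := hf.continuousOn
  have hgc := hg.continuousOn
  have hsub : ∀ a b : ℝ, 0 ≤ a → 0 ≤ b → uIcc a b ⊆ Ici (0:ℝ) := by
    intro a b ha hb x hx
    exact le_trans (le_inf ha hb) hx.1
  have hint : ∀ a b : ℝ, 0 ≤ a → 0 ≤ b →
      IntervalIntegrable (fun t => f' t * g t + f t * g' t) volume a b :=
    fun a b ha hb => ((hf.1 a b ha hb).mul_continuousOn (hgc.mono (hsub a b ha hb))).add
      ((hg.1 a b ha hb).continuousOn_mul (hfc.mono (hsub a b ha hb)))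
  refine ⟨hint, fun b hb => ?_⟩
  have huIcc : uIcc (0:ℝ) b = Icc 0 b := uIcc_of_le hb
  have hf'I : IntervalIntegrable f' volume 0 b := hf.1 0 b le_rfl hb
  have hg'I : IntervalIntegrable g' volume 0 b := hg.1 0 b le_rfl hb
  have hf'i : IntegrableOn f' (Ioc 0 b) volume := hf'I.1
  have hg'i : IntegrableOn g' (Ioc 0 b) volume := hg'I.1
  set ν := volume.restrict (Ioc (0:ℝ) b) with hν
  set P := ∫ τ in (0:ℝ)..b, f' τ with hP
  set Q := ∫ σ in (0:ℝ)..b, g' σ with hQ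
  set D1 := ∫ τ in (0:ℝ)..b, f' τ * (∫ σ in (0:ℝ)..τ, g' σ) with hD1
  set D2 := ∫ σ in (0:ℝ)..b, g' σ * (∫ τ in (0:ℝ)..σ, f' τ) with hD2
  -- continuity of the primitives
  have hFcont : ContinuousOn (fun x => ∫ t in (0:ℝ)..x, f' t) (uIcc (0:ℝ) b) :=
    continuousOn_primitive_interval' hf'I left_mem_uIcc
  have hGcont : ContinuousOn (fun x => ∫ t in (0:ℝ)..x, g' t) (uIcc (0:ℝ) b) :=
    continuousOn_primitive_interval' hg'I left_mem_uIcc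
  -- Step 1 : split the integral
  have step1 : (∫ s in (0:ℝ)..b, (f' s * g s + f s * g' s))
      = (g 0 * P + D1) + (f 0 * Q + D2) := by
    have hcongr : EqOn (fun s => f' s * g s + f s * g' s)
        (fun s => (g 0 * f' s + f' s * (∫ σ in (0:ℝ)..s, g' σ))
          + (f 0 * g' s + g' s * (∫ τ in (0:ℝ)..s, f' τ))) (uIcc (0:ℝ) b) := by
      intro s hs
      rw [huIcc] at hs
      have h1 := hf.2 s hs.1
      have h2 := hg.2 s hs.1
      simp only
      rw [h1, h2]; ring
    rw [intervalIntegral.integral_congr hcongr]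
    have i1 : IntervalIntegrable (fun s => g 0 * f' s) volume 0 b := hf'I.const_mul _
    have i2 : IntervalIntegrable (fun s => f' s * (∫ σ in (0:ℝ)..s, g' σ)) volume 0 b :=
      hf'I.mul_continuousOn hGcont
    have i3 : IntervalIntegrable (fun s => f 0 * g' s) volume 0 b := hg'I.const_mul _
    have i4 : IntervalIntegrable (fun s => g' s * (∫ τ in (0:ℝ)..s, f' τ)) volume 0 b :=
      hg'I.mul_continuousOn hFcont
    rw [intervalIntegral.integral_add (i1.add i2) (i3.add i4),
      intervalIntegral.integral_add i1 i2, intervalIntegral.integral_add i3 i4,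
      intervalIntegral.integral_const_mul, intervalIntegral.integral_const_mul]
  -- Step 2 : Fubini
  have hbase : Integrable (fun p : ℝ × ℝ => f' p.1 * g' p.2) (ν.prod ν) :=
    hf'i.mul_prod hg'i
  have hSm : MeasurableSet {p : ℝ × ℝ | p.2 ≤ p.1} :=
    measurableSet_le measurable_snd measurable_fst
  have hS'm : MeasurableSet {p : ℝ × ℝ | p.1 ≤ p.2} :=
    measurableSet_le measurable_fst measurable_snd
  have hK1 : Integrable ({p : ℝ × ℝ | p.2 ≤ p.1}.indicator
      (fun p => f' p.1 * g' p.2)) (ν.prod ν) := hbase.indicator hSm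
  have hK2 : Integrable ({p : ℝ × ℝ | p.1 ≤ p.2}.indicator
      (fun p => f' p.1 * g' p.2)) (ν.prod ν) := hbase.indicator hS'm
  have huncurry : ∀ (S : Set (ℝ × ℝ)) (base : ℝ × ℝ → ℝ),
      Function.uncurry (fun τ σ => S.indicator base (τ, σ)) = S.indicator base := by
    intro S base; funext p; simp [Function.uncurry]
  have hD1eq : D1 = ∫ p, ({p : ℝ × ℝ | p.2 ≤ p.1}.indicator
      (fun p => f' p.1 * g' p.2)) p ∂(ν.prod ν) := by
    have e1 : D1 = ∫ τ, (∫ σ, ({p : ℝ × ℝ | p.2 ≤ p.1}.indicator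
        (fun p => f' p.1 * g' p.2)) (τ, σ) ∂ν) ∂ν := by
      rw [hD1, intervalIntegral.integral_of_le hb]
      apply setIntegral_congr_fun measurableSet_Ioc
      intro τ hτ
      have hinter : Ioc (0:ℝ) b ∩ Iic τ = Ioc 0 τ := by
        ext σ
        simp only [mem_inter_iff, mem_Ioc, mem_Iic]
        constructor
        · rintro ⟨⟨u1, _⟩, u3⟩; exact ⟨u1, u3⟩
        · rintro ⟨u1, u2⟩; exact ⟨⟨u1, u2.trans hτ.2⟩, u2⟩
      have hi : (∫ σ in (0:ℝ)..τ, g' σ) = ∫ σ, (Iic τ).indicator g' σ ∂ν := by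
        rw [intervalIntegral.integral_of_le hτ.1.le, hν,
          setIntegral_indicator measurableSet_Iic, hinter]
      simp only
      rw [hi, ← MeasureTheory.integral_const_mul]
      apply MeasureTheory.integral_congr_ae
      filter_upwards with σ
      by_cases hc : σ ≤ τ <;>
        simp [Set.indicator_apply, mem_Iic, mem_setOf_eq, hc]
    rw [e1, MeasureTheory.integral_integral (by rw [huncurry]; exact hK1)]
  have hD2eq : D2 = ∫ p, ({p : ℝ × ℝ | p.1 ≤ p.2}.indicator
      (fun p => f' p.1 * g' p.2)) p ∂(ν.prod ν) := by
    have e1 : D2 = ∫ σ, (∫ τ, ({p : ℝ × ℝ | p.2 ≤ p.1}.indicator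
        (fun p => g' p.1 * f' p.2)) (σ, τ) ∂ν) ∂ν := by
      rw [hD2, intervalIntegral.integral_of_le hb]
      apply setIntegral_congr_fun measurableSet_Ioc
      intro σ hσ
      have hinter : Ioc (0:ℝ) b ∩ Iic σ = Ioc 0 σ := by
        ext τ
        simp only [mem_inter_iff, mem_Ioc, mem_Iic]
        constructor
        · rintro ⟨⟨u1, _⟩, u3⟩; exact ⟨u1, u3⟩
        · rintro ⟨u1, u2⟩; exact ⟨⟨u1, u2.trans hσ.2⟩, u2⟩
      have hi : (∫ τ in (0:ℝ)..σ, f' τ) = ∫ τ, (Iic σ).indicator f' τ ∂ν := by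
        rw [intervalIntegral.integral_of_le hσ.1.le, hν,
          setIntegral_indicator measurableSet_Iic, hinter]
      simp only
      rw [hi, ← MeasureTheory.integral_const_mul]
      apply MeasureTheory.integral_congr_ae
      filter_upwards with τ
      by_cases hc : τ ≤ σ <;>
        simp [Set.indicator_apply, mem_Iic, mem_setOf_eq, hc]
    have hK2' : Integrable ({p : ℝ × ℝ | p.2 ≤ p.1}.indicator
        (fun p => g' p.1 * f' p.2)) (ν.prod ν) :=
      (hg'i.mul_prod hf'i).indicator hSm
    rw [e1, MeasureTheory.integral_integral (by rw [huncurry]; exact hK2')]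
    rw [← MeasureTheory.integral_prod_swap]
    apply MeasureTheory.integral_congr_ae
    filter_upwards with p
    by_cases hc : p.1 ≤ p.2 <;>
      simp [Set.indicator_apply, mem_setOf_eq, Prod.swap, hc, mul_comm]
  have hdiag : (ν.prod ν) {p : ℝ × ℝ | p.1 = p.2} = 0 := by
    have hDm : MeasurableSet {p : ℝ × ℝ | p.1 = p.2} :=
      measurableSet_eq_fun measurable_fst measurable_snd
    rw [Measure.prod_apply hDm]
    have hz : ∀ τ : ℝ, ν (Prod.mk τ ⁻¹' {p : ℝ × ℝ | p.1 = p.2}) = 0 := by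
      intro τ
      have hpre : Prod.mk τ ⁻¹' {p : ℝ × ℝ | p.1 = p.2} = {τ} := by
        ext σ; simp [eq_comm]
      rw [hpre, hν, Measure.restrict_apply (measurableSet_singleton τ)]
      exact measure_mono_null inter_subset_left Real.volume_singleton
    simp [hz]
  have step2 : D1 + D2 = P * Q := by
    have hsum : (∫ p, ({p : ℝ × ℝ | p.2 ≤ p.1}.indicator (fun p => f' p.1 * g' p.2)) p ∂(ν.prod ν))
        + (∫ p, ({p : ℝ × ℝ | p.1 ≤ p.2}.indicator (fun p => f' p.1 * g' p.2)) p ∂(ν.prod ν))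
        = ∫ p, (f' p.1 * g' p.2
            + ({p : ℝ × ℝ | p.1 = p.2}.indicator (fun p => f' p.1 * g' p.2)) p) ∂(ν.prod ν) := by
      rw [← integral_add hK1 hK2]
      apply MeasureTheory.integral_congr_ae
      filter_upwards with p
      rcases lt_trichotomy p.1 p.2 with h | h | h
      · have h1 : ¬ p.2 ≤ p.1 := not_le.2 h
        have h3 : ¬ p.1 = p.2 := ne_of_lt h
        simp [Set.indicator_apply, mem_setOf_eq, h1, h.le, h3]
      · simp [Set.indicator_apply, mem_setOf_eq, h, le_of_eq h, le_of_eq h.symm]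
      · have h1 : ¬ p.1 ≤ p.2 := not_le.2 h
        have h3 : ¬ p.1 = p.2 := (ne_of_lt h).symm
        simp [Set.indicator_apply, mem_setOf_eq, h1, h.le, h3]
    have hdz : (∫ p, ({p : ℝ × ℝ | p.1 = p.2}.indicator (fun p => f' p.1 * g' p.2)) p ∂(ν.prod ν))
        = 0 := by
      rw [MeasureTheory.integral_indicator (measurableSet_eq_fun measurable_fst measurable_snd),
        Measure.restrict_eq_zero.2 hdiag, integral_zero_measure]
    rw [hD1eq, hD2eq, hsum, integral_add (hbase) ((hbase).indicator
      (measurableSet_eq_fun measurable_fst measurable_snd)), hdz, add_zero,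
      MeasureTheory.integral_prod_mul]
    rw [hP, hQ, intervalIntegral.integral_of_le hb, intervalIntegral.integral_of_le hb]
  show f b * g b = f 0 * g 0 + ∫ s in (0:ℝ)..b, (f' s * g s + f s * g' s)
  rw [step1]
  have hfb : f b = f 0 + P := hf.2 b hb
  have hgb : g b = g 0 + Q := hg.2 b hb
  rw [hfb, hgb]
  linear_combination (-1 : ℝ) * step2


theorem uIcc_subset_Ici {a b : ℝ} (ha : 0 ≤ a) (hb : 0 ≤ b) : uIcc a b ⊆ Ici (0:ℝ) :=
  fun x hx => le_trans (le_inf ha hb) hx.1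

theorem isPrim_A {α : ℝ → ℝ}
    (hα : ∀ a b : ℝ, 0 ≤ a → 0 ≤ b → IntervalIntegrable α volume a b) :
    IsPrim (fun t => ∫ s in (0:ℝ)..t, α s) α := by
  refine ⟨hα, fun t ht => ?_⟩
  simp [intervalIntegral.integral_same]

theorem isPrim_pow {α : ℝ → ℝ}
    (hα : ∀ a b : ℝ, 0 ≤ a → 0 ≤ b → IntervalIntegrable α volume a b) :
    ∀ n : ℕ, IsPrim
      (fun t => (∫ s in (0:ℝ)..t, α s) ^ (n+1) / (Nat.factorial (n+1) : ℝ))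
      (fun t => α t * (∫ s in (0:ℝ)..t, α s) ^ n / (Nat.factorial n : ℝ)) := by
  have hA := isPrim_A hα
  intro n
  induction n with
  | zero =>
      exact hA.congr (fun t => by simp [Nat.factorial]) (fun t => by simp [Nat.factorial])
  | succ n ih =>
      have h := (hA.mul ih).const_mul (((n:ℝ)+2)⁻¹)
      have hne1 : ((Nat.factorial (n+1) : ℝ)) ≠ 0 := Nat.cast_ne_zero.2 (Nat.factorial_ne_zero _)
      have hne0 : ((Nat.factorial n : ℝ)) ≠ 0 := Nat.cast_ne_zero.2 (Nat.factorial_ne_zero _)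
      have hfact2 : (Nat.factorial (n+2) : ℝ) = ((n:ℝ)+2) * (Nat.factorial (n+1) : ℝ) := by
        rw [Nat.factorial_succ]; push_cast; ring
      have hfact1 : (Nat.factorial (n+1) : ℝ) = ((n:ℝ)+1) * (Nat.factorial n : ℝ) := by
        rw [Nat.factorial_succ]; push_cast; ring
      refine h.congr (fun t => ?_) (fun t => ?_)
      · show ((n:ℝ)+2)⁻¹ * ((∫ s in (0:ℝ)..t, α s) *
            ((∫ s in (0:ℝ)..t, α s) ^ (n+1) / (Nat.factorial (n+1) : ℝ))) = _
        show _ = (∫ s in (0:ℝ)..t, α s) ^ (n+1+1) / (Nat.factorial (n+1+1) : ℝ)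
        have h22 : (Nat.factorial (n+1+1) : ℝ) = ((n:ℝ)+2) * (Nat.factorial (n+1) : ℝ) := hfact2
        rw [h22]
        field_simp
        ring
      · show ((n:ℝ)+2)⁻¹ * (α t * ((∫ s in (0:ℝ)..t, α s) ^ (n+1) / (Nat.factorial (n+1) : ℝ))
            + (∫ s in (0:ℝ)..t, α s) * (α t * (∫ s in (0:ℝ)..t, α s) ^ n / (Nat.factorial n : ℝ)))
            = α t * (∫ s in (0:ℝ)..t, α s) ^ (n+1) / (Nat.factorial (n+1) : ℝ)
        rw [hfact1]
        field_simp
        ring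

theorem sum_rep {α : ℝ → ℝ}
    (hα : ∀ a b : ℝ, 0 ≤ a → 0 ≤ b → IntervalIntegrable α volume a b)
    (N : ℕ) {t : ℝ} (ht : 0 ≤ t) :
    ∑ n ∈ Finset.range (N+1), (∫ s in (0:ℝ)..t, α s) ^ n / (Nat.factorial n : ℝ)
      = 1 + ∫ τ in (0:ℝ)..t,
          (α τ * ∑ n ∈ Finset.range N, (∫ s in (0:ℝ)..τ, α s) ^ n / (Nat.factorial n : ℝ)) := by
  rw [Finset.sum_range_succ']
  have h0 : (∫ s in (0:ℝ)..(0:ℝ), α s) = 0 := intervalIntegral.integral_same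
  have hterm : ∀ n : ℕ, (∫ s in (0:ℝ)..t, α s) ^ (n+1) / (Nat.factorial (n+1) : ℝ)
      = ∫ τ in (0:ℝ)..t, (α τ * (∫ s in (0:ℝ)..τ, α s) ^ n / (Nat.factorial n : ℝ)) := by
    intro n
    have h := (isPrim_pow hα n).2 t ht
    simp only at h
    rw [h, h0, zero_pow (Nat.succ_ne_zero n), zero_div, zero_add]
  have hsum : ∑ n ∈ Finset.range N, ((∫ s in (0:ℝ)..t, α s) ^ (n+1) / (Nat.factorial (n+1) : ℝ))
      = ∫ τ in (0:ℝ)..t,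
          ∑ n ∈ Finset.range N, (α τ * (∫ s in (0:ℝ)..τ, α s) ^ n / (Nat.factorial n : ℝ)) := by
    rw [intervalIntegral.integral_finset_sum (fun n _ => (isPrim_pow hα n).1 0 t le_rfl ht)]
    exact Finset.sum_congr rfl (fun n _ => hterm n)
  have hcong : (∫ τ in (0:ℝ)..t,
        ∑ n ∈ Finset.range N, (α τ * (∫ s in (0:ℝ)..τ, α s) ^ n / (Nat.factorial n : ℝ)))
      = ∫ τ in (0:ℝ)..t,
        (α τ * ∑ n ∈ Finset.range N, (∫ s in (0:ℝ)..τ, α s) ^ n / (Nat.factorial n : ℝ)) := by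
    apply intervalIntegral.integral_congr
    intro τ _
    show ∑ n ∈ Finset.range N, (α τ * (∫ s in (0:ℝ)..τ, α s) ^ n / (Nat.factorial n : ℝ))
      = α τ * ∑ n ∈ Finset.range N, (∫ s in (0:ℝ)..τ, α s) ^ n / (Nat.factorial n : ℝ)
    rw [Finset.mul_sum]
    exact Finset.sum_congr rfl (fun n _ => mul_div_assoc _ _ _)
  rw [hsum, hcong]
  simp only [pow_zero, Nat.factorial_zero, Nat.cast_one, div_one]
  rw [add_comm]

theorem isPrim_exp {α : ℝ → ℝ}
    (hα : ∀ a b : ℝ, 0 ≤ a → 0 ≤ b → IntervalIntegrable α volume a b) :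
    IsPrim (fun t => Real.exp (∫ s in (0:ℝ)..t, α s))
      (fun t => α t * Real.exp (∫ s in (0:ℝ)..t, α s)) := by
  have hA := isPrim_A hα
  have hAc := hA.continuousOn
  have hexp_hasSum : ∀ x : ℝ, HasSum (fun n => x ^ n / (Nat.factorial n : ℝ)) (Real.exp x) := by
    intro x
    rw [Real.exp_eq_exp_ℝ]
    exact NormedSpace.expSeries_div_hasSum_exp x
  constructor
  · intro a b ha hb
    exact (hα a b ha hb).mul_continuousOn
      (Real.continuous_exp.comp_continuousOn (hAc.mono (uIcc_subset_Ici ha hb)))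
  · intro t ht
    set A : ℝ → ℝ := fun t => ∫ s in (0:ℝ)..t, α s with hAdef
    have h0 : A 0 = 0 := intervalIntegral.integral_same
    have hIoc : uIoc (0:ℝ) t = Ioc 0 t := uIoc_of_le ht
    -- bound for A on [0,t]
    obtain ⟨B, hB⟩ : ∃ B, ∀ x ∈ uIcc (0:ℝ) t, ‖A x‖ ≤ B :=
      isCompact_uIcc.exists_bound_of_continuousOn (hAc.mono (uIcc_subset_Ici le_rfl ht))
    -- left side tendsto
    have hL : Tendsto (fun N => ∑ n ∈ Finset.range (N+1), A t ^ n / (Nat.factorial n : ℝ))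
        atTop (nhds (Real.exp (A t))) :=
      ((hexp_hasSum (A t)).tendsto_sum_nat).comp (tendsto_add_atTop_nat 1)
    -- right side tendsto
    have hαm : AEStronglyMeasurable α (volume.restrict (uIoc (0:ℝ) t)) := by
      rw [hIoc]; exact (hα 0 t le_rfl ht).1.aestronglyMeasurable
    have hAm : AEStronglyMeasurable A (volume.restrict (uIoc (0:ℝ) t)) := by
      rw [hIoc]
      exact ((hAc.mono (fun x hx => le_of_lt hx.1)).aestronglyMeasurable measurableSet_Ioc)
    have hR : Tendsto (fun N => ∫ τ in (0:ℝ)..t,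
        (α τ * ∑ n ∈ Finset.range N, A τ ^ n / (Nat.factorial n : ℝ)))
        atTop (nhds (∫ τ in (0:ℝ)..t, α τ * Real.exp (A τ))) := by
      apply intervalIntegral.tendsto_integral_filter_of_dominated_convergence
        (fun τ => |α τ| * Real.exp B)
      · filter_upwards with N
        apply hαm.mul
        have hScont : ContinuousOn
            (fun τ => ∑ n ∈ Finset.range N, A τ ^ n / (Nat.factorial n : ℝ)) (Ioc 0 t) := by
          apply continuousOn_finset_sum
          intro n _
          exact ((hAc.mono (fun x hx => le_of_lt hx.1)).pow n).div_const _
        rw [hIoc]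
        exact hScont.aestronglyMeasurable measurableSet_Ioc
      · filter_upwards with N
        filter_upwards with τ
        intro hτ
        have hAτ : |A τ| ≤ B := by
          have := hB τ (uIoc_subset_uIcc hτ)
          simpa using this
        have h1 : |∑ n ∈ Finset.range N, A τ ^ n / (Nat.factorial n : ℝ)| ≤ Real.exp B := by
          calc |∑ n ∈ Finset.range N, A τ ^ n / (Nat.factorial n : ℝ)|
              ≤ ∑ n ∈ Finset.range N, |A τ ^ n / (Nat.factorial n : ℝ)| :=
                Finset.abs_sum_le_sum_abs _ _
            _ = ∑ n ∈ Finset.range N, |A τ| ^ n / (Nat.factorial n : ℝ) := by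
                apply Finset.sum_congr rfl
                intro n _
                rw [abs_div, abs_pow, abs_of_nonneg (by positivity : (0:ℝ) ≤ (Nat.factorial n : ℝ))]
            _ ≤ Real.exp |A τ| := Real.sum_le_exp_of_nonneg (abs_nonneg _) N
            _ ≤ Real.exp B := Real.exp_le_exp.2 hAτ
        calc ‖α τ * ∑ n ∈ Finset.range N, A τ ^ n / (Nat.factorial n : ℝ)‖
            = |α τ| * |∑ n ∈ Finset.range N, A τ ^ n / (Nat.factorial n : ℝ)| := abs_mul _ _
          _ ≤ |α τ| * Real.exp B := by
              exact mul_le_mul_of_nonneg_left h1 (abs_nonneg _)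
      · exact ((hα 0 t le_rfl ht).abs).mul_const _
      · filter_upwards with τ
        intro _
        exact ((hexp_hasSum (A τ)).tendsto_sum_nat).const_mul (α τ)
    have hL' : Tendsto (fun N => ∑ n ∈ Finset.range (N+1), A t ^ n / (Nat.factorial n : ℝ))
        atTop (nhds (1 + ∫ τ in (0:ℝ)..t, α τ * Real.exp (A τ))) := by
      have : (fun N => ∑ n ∈ Finset.range (N+1), A t ^ n / (Nat.factorial n : ℝ))
          = fun N => 1 + ∫ τ in (0:ℝ)..t,
            (α τ * ∑ n ∈ Finset.range N, A τ ^ n / (Nat.factorial n : ℝ)) := by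
        funext N; exact sum_rep hα N ht
      rw [this]
      exact hR.const_add 1
    have := tendsto_nhds_unique hL hL'
    simpa [h0] using this


theorem posPart_intervalIntegrable {β : ℝ → ℝ} {a b : ℝ}
    (h : IntervalIntegrable β volume a b) :
    IntervalIntegrable (fun τ => max (β τ) 0) volume a b :=
  ⟨h.1.pos_part, h.2.pos_part⟩

theorem key_estimate {α β ξ ξ' : ℝ → ℝ}
    (hα : ∀ a b : ℝ, 0 ≤ a → 0 ≤ b → IntervalIntegrable α volume a b)
    (hβ : ∀ a b : ℝ, 0 ≤ a → 0 ≤ b → IntervalIntegrable β volume a b)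
    (hξ' : ∀ a b : ℝ, 0 ≤ a → 0 ≤ b → IntervalIntegrable ξ' volume a b)
    (hFTC : ∀ t ∈ Ici (0:ℝ), ξ t = ξ 0 + ∫ s in (0:ℝ)..t, ξ' s)
    (hineq : ∀ᵐ t ∂(volume.restrict (Ici (0:ℝ))), ξ' t + α t * ξ t ≤ β t)
    {s t : ℝ} (hs : 0 ≤ s) (hst : s ≤ t) :
    ξ t ≤ ξ s * Real.exp (-(∫ τ in s..t, α τ))
      + ∫ τ in s..t, (max (β τ) 0) * Real.exp (-(∫ σ in τ..t, α σ)) := by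
  have ht : 0 ≤ t := hs.trans hst
  set A : ℝ → ℝ := fun u => ∫ s in (0:ℝ)..u, α s with hAdef
  set E : ℝ → ℝ := fun u => Real.exp (A u) with hEdef
  have hAprim : IsPrim A α := isPrim_A hα
  have hEprim : IsPrim E (fun u => α u * E u) := isPrim_exp hα
  have hEcont : ContinuousOn E (Ici (0:ℝ)) := hEprim.continuousOn
  have hξprim : IsPrim ξ ξ' := ⟨hξ', fun u hu => hFTC u hu⟩
  have hprod := hξprim.mul hEprim
  have hdiff : ξ t * E t - ξ s * E s
      = ∫ τ in s..t, (ξ' τ * E τ + ξ τ * (α τ * E τ)) := hprod.sub_eq hs ht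
  -- a.e. bound on [s,t]
  have hsub : Icc s t ⊆ Ici (0:ℝ) := fun x hx => hs.trans hx.1
  have hae : ∀ᵐ τ ∂(volume.restrict (Icc s t)),
      ξ' τ * E τ + ξ τ * (α τ * E τ) ≤ (max (β τ) 0) * E τ := by
    have h1 : ∀ᵐ τ ∂(volume.restrict (Icc s t)), ξ' τ + α τ * ξ τ ≤ β τ :=
      ae_restrict_of_ae_restrict_of_subset hsub hineq
    filter_upwards [h1] with τ hτ
    have hE : (0:ℝ) ≤ E τ := (Real.exp_pos _).le
    have h2 : (ξ' τ + α τ * ξ τ) * E τ ≤ (max (β τ) 0) * E τ :=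
      mul_le_mul_of_nonneg_right (hτ.trans (le_max_left _ _)) hE
    nlinarith [h2]
  have hEcont' : ContinuousOn E (uIcc s t) := hEcont.mono (uIcc_subset_Ici hs ht)
  have i1 : IntervalIntegrable (fun τ => ξ' τ * E τ + ξ τ * (α τ * E τ)) volume s t :=
    hprod.1 s t hs ht
  have i2 : IntervalIntegrable (fun τ => (max (β τ) 0) * E τ) volume s t :=
    (posPart_intervalIntegrable (hβ s t hs ht)).mul_continuousOn hEcont'
  have hmono : (∫ τ in s..t, (ξ' τ * E τ + ξ τ * (α τ * E τ)))
      ≤ ∫ τ in s..t, (max (β τ) 0) * E τ :=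
    intervalIntegral.integral_mono_ae_restrict hst i1 i2 hae
  have hmain : ξ t * E t ≤ ξ s * E s + ∫ τ in s..t, (max (β τ) 0) * E τ := by
    linarith [hdiff, hmono]
  have hEt : (0:ℝ) < E t := Real.exp_pos _
  -- rewrite the target quantities
  have hAsub : A t - A s = ∫ τ in s..t, α τ := hAprim.sub_eq hs ht
  have hexp1 : Real.exp (-(∫ τ in s..t, α τ)) = E s / E t := by
    rw [← hAsub, neg_sub, Real.exp_sub]
  have hexp2 : (∫ τ in s..t, (max (β τ) 0) * Real.exp (-(∫ σ in τ..t, α σ)))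
      = (∫ τ in s..t, (max (β τ) 0) * E τ) / E t := by
    rw [div_eq_mul_inv, ← intervalIntegral.integral_mul_const]
    apply intervalIntegral.integral_congr
    intro τ hτ
    have hτ0 : 0 ≤ τ := uIcc_subset_Ici hs ht hτ
    have hsub2 : A t - A τ = ∫ σ in τ..t, α σ := hAprim.sub_eq hτ0 ht
    show max (β τ) 0 * Real.exp (-(∫ σ in τ..t, α σ)) = max (β τ) 0 * E τ * (E t)⁻¹
    rw [← hsub2, neg_sub, Real.exp_sub, div_eq_mul_inv]
    ring
  rw [hexp1, hexp2]
  rw [div_eq_mul_inv, div_eq_mul_inv, ← mul_assoc, ← add_mul]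
  calc ξ t = ξ t * E t * (E t)⁻¹ := by field_simp
    _ ≤ (ξ s * E s + ∫ τ in s..t, (max (β τ) 0) * E τ) * (E t)⁻¹ :=
        mul_le_mul_of_nonneg_right hmain (inv_nonneg.2 hEt.le)
  

theorem integral_alpha_lower {α : ℝ → ℝ} {T γ M t₀ : ℝ}
    (hT : 0 < T) (hγpos : 0 < γ) (ht₀ : 0 ≤ t₀)
    (hα : ∀ a b : ℝ, 0 ≤ a → 0 ≤ b → IntervalIntegrable α volume a b)
    (hγ : ∀ r, t₀ ≤ r → γ * T ≤ ∫ τ in r..(r+T), α τ)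
    (hM : ∀ r, t₀ ≤ r → (∫ τ in r..(r+T), max (-α τ) 0) ≤ M * T)
    {τ t : ℝ} (hτ : t₀ ≤ τ) (hτt : τ ≤ t) :
    γ * (t - τ) - (γ + M) * T ≤ ∫ σ in τ..t, α σ := by
  have hτ0 : 0 ≤ τ := ht₀.trans hτ
  have ht0 : 0 ≤ t := hτ0.trans hτt
  -- integral over n full windows
  have claim : ∀ n : ℕ, ∀ r, t₀ ≤ r → γ * ((n:ℝ)*T) ≤ ∫ σ in r..(r + (n:ℝ)*T), α σ := by
    intro n
    induction n with
    | zero => intro r hr; simp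
    | succ n ih =>
        intro r hr
        have hr0 : 0 ≤ r := ht₀.trans hr
        have h1 : r + ((n:ℝ)+1)*T = (r + (n:ℝ)*T) + T := by ring
        have hrn0 : 0 ≤ r + (n:ℝ)*T := by positivity
        have hrn : t₀ ≤ r + (n:ℝ)*T := hr.trans (le_add_of_nonneg_right (by positivity))
        have hadd := intervalIntegral.integral_add_adjacent_intervals
          (hα r (r + (n:ℝ)*T) hr0 hrn0) (hα (r + (n:ℝ)*T) ((r + (n:ℝ)*T) + T) hrn0 (by positivity))
        have h2 := hγ (r + (n:ℝ)*T) hrn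
        have h3 := ih r hr
        push_cast
        rw [h1, ← hadd]
        push_cast at h3
        nlinarith [h2, h3]
  set n := ⌊(t - τ)/T⌋₊ with hn
  have hdivnn : 0 ≤ (t - τ)/T := div_nonneg (by linarith) hT.le
  have hn1 : (n:ℝ)*T ≤ t - τ := (le_div_iff₀ hT).1 (Nat.floor_le hdivnn)
  have hn2 : t - τ < ((n:ℝ)+1)*T := (div_lt_iff₀ hT).1 (Nat.lt_floor_add_one _)
  have hτn0 : 0 ≤ τ + (n:ℝ)*T := by positivity
  have hτnt : τ + (n:ℝ)*T ≤ t := by linarith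
  have hsplit := intervalIntegral.integral_add_adjacent_intervals
    (hα τ (τ + (n:ℝ)*T) hτ0 hτn0) (hα (τ + (n:ℝ)*T) t hτn0 ht0)
  have low1 := claim n τ hτ
  -- lower bound for the partial window
  have low2 : -(M*T) ≤ ∫ σ in (τ + (n:ℝ)*T)..t, α σ := by
    have i1 : IntervalIntegrable (fun σ => max (-α σ) 0) volume (τ + (n:ℝ)*T) t :=
      posPart_intervalIntegrable ((hα (τ + (n:ℝ)*T) t hτn0 ht0).neg)
    have e1 : (∫ σ in (τ + (n:ℝ)*T)..t, (- max (-α σ) 0)) ≤ ∫ σ in (τ + (n:ℝ)*T)..t, α σ := by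
      apply intervalIntegral.integral_mono_on hτnt i1.neg (hα (τ + (n:ℝ)*T) t hτn0 ht0)
      intro σ _
      have h := le_max_left (-α σ) (0:ℝ)
      show -max (-α σ) 0 ≤ α σ
      linarith
    rw [intervalIntegral.integral_neg] at e1
    have e2 : (∫ σ in (τ + (n:ℝ)*T)..t, max (-α σ) 0)
        ≤ ∫ σ in (τ + (n:ℝ)*T)..((τ + (n:ℝ)*T)+T), max (-α σ) 0 := by
      have i2 : IntervalIntegrable (fun σ => max (-α σ) 0) volume t ((τ + (n:ℝ)*T)+T) :=
        posPart_intervalIntegrable ((hα t ((τ + (n:ℝ)*T)+T) ht0 (by positivity)).neg)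
      have hadd := intervalIntegral.integral_add_adjacent_intervals i1 i2
      have e3 : 0 ≤ ∫ σ in t..((τ + (n:ℝ)*T)+T), max (-α σ) 0 :=
        intervalIntegral.integral_nonneg (by linarith) (fun u _ => le_max_right _ _)
      linarith
    have e4 := hM (τ + (n:ℝ)*T) (hτ.trans (le_add_of_nonneg_right (by positivity)))
    linarith
  have hlast : γ * ((n:ℝ)*T) ≥ γ * (t - τ) - γ * T := by nlinarith
  have hexpand : (γ+M)*T = γ*T + M*T := by ring
  linarith [hsplit, low1, low2, hlast]

theorem beta_window_bound {g : ℝ → ℝ} {T γ ε t₁ : ℝ} (hT : 0 < T) (hγpos : 0 < γ)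
    (ht₁ : 0 ≤ t₁)
    (hgnn : ∀ τ, 0 ≤ g τ)
    (hgint : ∀ a b : ℝ, 0 ≤ a → 0 ≤ b → IntervalIntegrable g volume a b)
    (hg : ∀ r, t₁ ≤ r → (∫ τ in r..(r+T), g τ) ≤ ε)
    {t : ℝ} (ht : t₁ ≤ t) :
    (∫ τ in t₁..t, g τ * Real.exp (-γ*(t - τ)))
      ≤ ε * Real.exp (2*γ*T) / (Real.exp (γ*T) - 1) := by
  have hε : 0 ≤ ε :=
    le_trans (intervalIntegral.integral_nonneg (by linarith) (fun u _ => hgnn u)) (hg t₁ le_rfl)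
  set a : ℕ → ℝ := fun k => t₁ + (k:ℝ)*T with ha
  have ha0 : ∀ k : ℕ, 0 ≤ a k := fun k => by positivity
  have hak : ∀ k : ℕ, t₁ ≤ a k := fun k => le_add_of_nonneg_right (by positivity)
  have hasucc : ∀ k : ℕ, a (k+1) = a k + T := by
    intro k; simp only [ha]; push_cast; ring
  have hord : ∀ k : ℕ, a k ≤ a (k+1) := fun k => by rw [hasucc]; linarith
  set n := ⌊(t - t₁)/T⌋₊ with hn
  have hdivnn : 0 ≤ (t - t₁)/T := div_nonneg (by linarith) hT.le
  have hn1 : (n:ℝ)*T ≤ t - t₁ := (le_div_iff₀ hT).1 (Nat.floor_le hdivnn)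
  have hn2 : t - t₁ < ((n:ℝ)+1)*T := (div_lt_iff₀ hT).1 (Nat.lt_floor_add_one _)
  have hcont : Continuous (fun τ : ℝ => Real.exp (-γ*(t - τ))) := by
    apply Real.continuous_exp.comp; continuity
  have hint : ∀ k : ℕ, IntervalIntegrable (fun τ => g τ * Real.exp (-γ*(t - τ)))
      volume (a k) (a (k+1)) :=
    fun k => (hgint (a k) (a (k+1)) (ha0 k) (ha0 (k+1))).mul_continuousOn
      hcont.continuousOn
  have hsum := intervalIntegral.sum_integral_adjacent_intervals
    (a := a) (n := n+1) (fun k _ => hint k)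
  have ht0 : 0 ≤ t := ht₁.trans ht
  have htan : t ≤ a (n+1) := by
    simp only [ha]; push_cast; linarith
  have hext : (∫ τ in t₁..t, g τ * Real.exp (-γ*(t - τ)))
      ≤ ∫ τ in (a 0)..(a (n+1)), g τ * Real.exp (-γ*(t - τ)) := by
    have ia : IntervalIntegrable (fun τ => g τ * Real.exp (-γ*(t - τ))) volume t₁ t :=
      (hgint t₁ t ht₁ ht0).mul_continuousOn hcont.continuousOn
    have ib : IntervalIntegrable (fun τ => g τ * Real.exp (-γ*(t - τ))) volume t (a (n+1)) :=
      (hgint t (a (n+1)) ht0 (ha0 (n+1))).mul_continuousOn hcont.continuousOn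
    have hadd := intervalIntegral.integral_add_adjacent_intervals ia ib
    have hnn : 0 ≤ ∫ τ in t..(a (n+1)), g τ * Real.exp (-γ*(t - τ)) :=
      intervalIntegral.integral_nonneg htan
        (fun u _ => mul_nonneg (hgnn u) (Real.exp_pos _).le)
    have ha00 : a 0 = t₁ := by simp [ha]
    rw [ha00]
    linarith
  have hwin : ∀ k ∈ Finset.range (n+1),
      (∫ τ in a k..a (k+1), g τ * Real.exp (-γ*(t - τ)))
        ≤ ε * Real.exp (γ*T*((k:ℝ)+1-(n:ℝ))) := by
    intro k _
    set C := Real.exp (-γ*(t - a (k+1))) with hC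
    have hCpos : 0 < C := Real.exp_pos _
    have step1 : (∫ τ in a k..a (k+1), g τ * Real.exp (-γ*(t - τ)))
        ≤ ∫ τ in a k..a (k+1), g τ * C := by
      apply intervalIntegral.integral_mono_on (hord k) (hint k)
        (((hgint (a k) (a (k+1)) (ha0 k) (ha0 (k+1)))).mul_const C)
      intro u hu
      apply mul_le_mul_of_nonneg_left _ (hgnn u)
      apply Real.exp_le_exp.2
      nlinarith [hu.2]
    have step2 : (∫ τ in a k..a (k+1), g τ * C) = (∫ τ in a k..a (k+1), g τ) * C :=
      intervalIntegral.integral_mul_const _ _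
    have step3 : (∫ τ in a k..a (k+1), g τ) ≤ ε := by
      rw [hasucc k] at *
      exact hg (a k) (hak k)
    have step4 : C ≤ Real.exp (γ*T*((k:ℝ)+1-(n:ℝ))) := by
      apply Real.exp_le_exp.2
      have : a (k+1) = t₁ + ((k:ℝ)+1)*T := by simp only [ha]; push_cast; ring
      rw [this]
      nlinarith [hn1]
    calc (∫ τ in a k..a (k+1), g τ * Real.exp (-γ*(t - τ)))
        ≤ (∫ τ in a k..a (k+1), g τ) * C := by rw [← step2]; exact step1
      _ ≤ ε * C := mul_le_mul_of_nonneg_right step3 hCpos.le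
      _ ≤ ε * Real.exp (γ*T*((k:ℝ)+1-(n:ℝ))) := mul_le_mul_of_nonneg_left step4 hε
  have hgeom : ∑ k ∈ Finset.range (n+1), ε * Real.exp (γ*T*((k:ℝ)+1-(n:ℝ)))
      ≤ ε * Real.exp (2*γ*T) / (Real.exp (γ*T) - 1) := by
    have hρ : (1:ℝ) < Real.exp (γ*T) := by
      rw [← Real.exp_zero]
      exact Real.exp_lt_exp.2 (by positivity)
    have hρ1 : Real.exp (γ*T) - 1 > 0 := by linarith
    have hterm : ∀ k : ℕ, Real.exp (γ*T*((k:ℝ)+1-(n:ℝ)))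
        = Real.exp (γ*T) ^ k * Real.exp (γ*T*(1-(n:ℝ))) := by
      intro k
      rw [← Real.exp_nat_mul, ← Real.exp_add]
      congr 1
      ring
    have hsum1 : ∑ k ∈ Finset.range (n+1), ε * Real.exp (γ*T*((k:ℝ)+1-(n:ℝ)))
        = ε * Real.exp (γ*T*(1-(n:ℝ))) * ∑ k ∈ Finset.range (n+1), Real.exp (γ*T) ^ k := by
      rw [Finset.mul_sum]
      apply Finset.sum_congr rfl
      intro k _
      rw [hterm k]
      ring
    have hgs : ∑ k ∈ Finset.range (n+1), Real.exp (γ*T) ^ k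
        = (Real.exp (γ*T) ^ (n+1) - 1) / (Real.exp (γ*T) - 1) := geom_sum_eq (by linarith) _
    rw [hsum1, hgs]
    have hval : Real.exp (γ*T*(1-(n:ℝ))) * (Real.exp (γ*T) ^ (n+1) - 1)
        ≤ Real.exp (2*γ*T) := by
      have h1 : Real.exp (γ*T*(1-(n:ℝ))) * Real.exp (γ*T) ^ (n+1) = Real.exp (2*γ*T) := by
        rw [← Real.exp_nat_mul, ← Real.exp_add]
        congr 1
        push_cast
        ring
      nlinarith [Real.exp_pos (γ*T*(1-(n:ℝ)))]
    rw [mul_assoc]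
    have hfrac : Real.exp (γ*T*(1-(n:ℝ))) * ((Real.exp (γ*T) ^ (n+1) - 1) / (Real.exp (γ*T) - 1))
        ≤ Real.exp (2*γ*T) / (Real.exp (γ*T) - 1) := by
      rw [← mul_div_assoc]
      exact (div_le_div_iff_of_pos_right hρ1).2 hval
    calc ε * (Real.exp (γ*T*(1-(n:ℝ))) * ((Real.exp (γ*T) ^ (n+1) - 1) / (Real.exp (γ*T) - 1)))
        ≤ ε * (Real.exp (2*γ*T) / (Real.exp (γ*T) - 1)) := mul_le_mul_of_nonneg_left hfrac hε
      _ = ε * Real.exp (2*γ*T) / (Real.exp (γ*T) - 1) := by rw [mul_div_assoc]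
  calc (∫ τ in t₁..t, g τ * Real.exp (-γ*(t - τ)))
      ≤ ∫ τ in (a 0)..(a (n+1)), g τ * Real.exp (-γ*(t - τ)) := hext
    _ = ∑ k ∈ Finset.range (n+1), ∫ τ in (a k)..(a (k+1)), g τ * Real.exp (-γ*(t - τ)) := hsum.symm
    _ ≤ ∑ k ∈ Finset.range (n+1), ε * Real.exp (γ*T*((k:ℝ)+1-(n:ℝ))) := Finset.sum_le_sum hwin
    _ ≤ ε * Real.exp (2*γ*T) / (Real.exp (γ*T) - 1) := hgeom


theorem decay_estimate {α β ξ ξ' : ℝ → ℝ} {T γ M t₀ : ℝ}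
    (hT : 0 < T) (hγpos : 0 < γ) (ht₀ : 0 ≤ t₀)
    (hα : ∀ a b : ℝ, 0 ≤ a → 0 ≤ b → IntervalIntegrable α volume a b)
    (hβ : ∀ a b : ℝ, 0 ≤ a → 0 ≤ b → IntervalIntegrable β volume a b)
    (hξ' : ∀ a b : ℝ, 0 ≤ a → 0 ≤ b → IntervalIntegrable ξ' volume a b)
    (hξ0 : ∀ t ∈ Ici (0:ℝ), 0 ≤ ξ t)
    (hFTC : ∀ t ∈ Ici (0:ℝ), ξ t = ξ 0 + ∫ s in (0:ℝ)..t, ξ' s)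
    (hineq : ∀ᵐ t ∂(volume.restrict (Ici (0:ℝ))), ξ' t + α t * ξ t ≤ β t)
    (hγwin : ∀ r, t₀ ≤ r → γ * T ≤ ∫ τ in r..(r+T), α τ)
    (hMwin : ∀ r, t₀ ≤ r → (∫ τ in r..(r+T), max (-α τ) 0) ≤ M * T)
    {s t : ℝ} (hs : t₀ ≤ s) (hst : s ≤ t) :
    ξ t ≤ ξ s * Real.exp ((γ+M)*T) * Real.exp (-γ*(t-s))
      + Real.exp ((γ+M)*T) * ∫ τ in s..t, (max (β τ) 0) * Real.exp (-γ*(t-τ)) := by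
  have hs0 : 0 ≤ s := ht₀.trans hs
  have ht : 0 ≤ t := hs0.trans hst
  set A : ℝ → ℝ := fun u => ∫ s in (0:ℝ)..u, α s with hAdef
  set E : ℝ → ℝ := fun u => Real.exp (A u) with hEdef
  set K : ℝ := Real.exp ((γ+M)*T) with hKdef
  have hAprim : IsPrim A α := isPrim_A hα
  have hEprim : IsPrim E (fun u => α u * E u) := isPrim_exp hα
  have hEcont : ContinuousOn E (Ici (0:ℝ)) := hEprim.continuousOn
  have hξprim : IsPrim ξ ξ' := ⟨hξ', fun u hu => hFTC u hu⟩
  have hprod := hξprim.mul hEprim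
  have hdiff : ξ t * E t - ξ s * E s
      = ∫ τ in s..t, (ξ' τ * E τ + ξ τ * (α τ * E τ)) := hprod.sub_eq hs0 ht
  have hsub : Icc s t ⊆ Ici (0:ℝ) := fun x hx => hs0.trans hx.1
  have hae : ∀ᵐ τ ∂(volume.restrict (Icc s t)),
      ξ' τ * E τ + ξ τ * (α τ * E τ) ≤ (max (β τ) 0) * E τ := by
    have h1 : ∀ᵐ τ ∂(volume.restrict (Icc s t)), ξ' τ + α τ * ξ τ ≤ β τ :=
      ae_restrict_of_ae_restrict_of_subset hsub hineq
    filter_upwards [h1] with τ hτ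
    have hE : (0:ℝ) ≤ E τ := (Real.exp_pos _).le
    have h2 : (ξ' τ + α τ * ξ τ) * E τ ≤ (max (β τ) 0) * E τ :=
      mul_le_mul_of_nonneg_right (hτ.trans (le_max_left _ _)) hE
    nlinarith [h2]
  have hEcont' : ContinuousOn E (uIcc s t) := hEcont.mono (uIcc_subset_Ici hs0 ht)
  have i1 : IntervalIntegrable (fun τ => ξ' τ * E τ + ξ τ * (α τ * E τ)) volume s t :=
    hprod.1 s t hs0 ht
  have i2 : IntervalIntegrable (fun τ => (max (β τ) 0) * E τ) volume s t :=
    (posPart_intervalIntegrable (hβ s t hs0 ht)).mul_continuousOn hEcont'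
  have hmono : (∫ τ in s..t, (ξ' τ * E τ + ξ τ * (α τ * E τ)))
      ≤ ∫ τ in s..t, (max (β τ) 0) * E τ :=
    intervalIntegral.integral_mono_ae_restrict hst i1 i2 hae
  have hmain : ξ t * E t ≤ ξ s * E s + ∫ τ in s..t, (max (β τ) 0) * E τ := by
    linarith [hdiff, hmono]
  have hEt : (0:ℝ) < E t := Real.exp_pos _
  -- ratio bound
  have hratio : ∀ τ, 0 ≤ τ → t₀ ≤ τ → τ ≤ t →
      E τ ≤ K * Real.exp (-γ*(t-τ)) * E t := by
    intro τ hτ0' hτ₀ hτt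
    have hlow := integral_alpha_lower hT hγpos ht₀ hα hγwin hMwin hτ₀ hτt
    have h1 : A t - A τ = ∫ σ in τ..t, α σ := hAprim.sub_eq hτ0' ht
    have h2 : E τ = Real.exp (A t - (∫ σ in τ..t, α σ)) := by
      rw [← h1]
      show Real.exp (A τ) = Real.exp (A t - (A t - A τ))
      congr 1
      ring
    have h3 : A t - (∫ σ in τ..t, α σ) ≤ ((γ+M)*T + -γ*(t-τ)) + A t := by linarith
    have h4 : Real.exp (((γ+M)*T + -γ*(t-τ)) + A t)
        = K * Real.exp (-γ*(t-τ)) * E t := by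
      rw [Real.exp_add, Real.exp_add]
    rw [h2, ← h4]
    exact Real.exp_le_exp.2 h3
  have hterm1 : ξ s * E s ≤ ξ s * (K * Real.exp (-γ*(t-s)) * E t) :=
    mul_le_mul_of_nonneg_left (hratio s hs0 hs hst) (hξ0 s hs0)
  have i2' : IntervalIntegrable
      (fun τ => (max (β τ) 0) * (K * Real.exp (-γ*(t-τ)) * E t)) volume s t := by
    apply (posPart_intervalIntegrable (hβ s t hs0 ht)).mul_continuousOn
    apply ContinuousOn.mul _ continuousOn_const
    apply ContinuousOn.mul continuousOn_const
    exact (Real.continuous_exp.comp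
      (continuous_const.mul (continuous_const.sub continuous_id))).continuousOn
  have hterm2 : (∫ τ in s..t, (max (β τ) 0) * E τ)
      ≤ ∫ τ in s..t, (max (β τ) 0) * (K * Real.exp (-γ*(t-τ)) * E t) := by
    apply intervalIntegral.integral_mono_on hst i2 i2'
    intro τ hτ
    exact mul_le_mul_of_nonneg_left (hratio τ (hs0.trans hτ.1) (hs.trans hτ.1) hτ.2)
      (le_max_right _ _)
  have hterm2' : (∫ τ in s..t, (max (β τ) 0) * (K * Real.exp (-γ*(t-τ)) * E t))
      = (∫ τ in s..t, (max (β τ) 0) * Real.exp (-γ*(t-τ))) * (K * E t) := by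
    rw [← intervalIntegral.integral_mul_const]
    apply intervalIntegral.integral_congr
    intro τ _
    show (max (β τ) 0) * (K * Real.exp (-γ*(t-τ)) * E t)
      = (max (β τ) 0) * Real.exp (-γ*(t-τ)) * (K * E t)
    ring
  have hfinal : ξ t * E t
      ≤ (ξ s * K * Real.exp (-γ*(t-s))
          + K * ∫ τ in s..t, (max (β τ) 0) * Real.exp (-γ*(t-τ))) * E t := by
    calc ξ t * E t ≤ ξ s * E s + ∫ τ in s..t, (max (β τ) 0) * E τ := hmain
      _ ≤ ξ s * (K * Real.exp (-γ*(t-s)) * E t)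
          + (∫ τ in s..t, (max (β τ) 0) * Real.exp (-γ*(t-τ))) * (K * E t) := by
            rw [← hterm2']
            exact add_le_add hterm1 hterm2
      _ = (ξ s * K * Real.exp (-γ*(t-s))
          + K * ∫ τ in s..t, (max (β τ) 0) * Real.exp (-γ*(t-τ))) * E t := by ring
  exact le_of_mul_le_mul_right hfinal hEt


theorem loc_int {φ : ℝ → ℝ} (h : ∀ t > (0:ℝ), IntervalIntegrable φ volume 0 t) :
    ∀ a b : ℝ, 0 ≤ a → 0 ≤ b → IntervalIntegrable φ volume a b := by
  intro a b ha hb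
  have hm : (0:ℝ) < max a b + 1 := by
    have := le_max_left a b
    linarith
  apply (h (max a b + 1) hm).mono_set
  apply uIcc_subset_uIcc
  · rw [Set.mem_uIcc]; left
    exact ⟨ha, (le_max_left a b).trans (by linarith)⟩
  · rw [Set.mem_uIcc]; left
    exact ⟨hb, (le_max_right a b).trans (by linarith)⟩

end GronwallAux

open Set intervalIntegral

/-- generalized Gronwall lemma. If `α, β` are locally integrable on `[0,∞)`
with `liminf_{t→∞} (1/T)∫_t^{t+T} α > 0`, `limsup_{t→∞} (1/T)∫_t^{t+T} α⁻ < ∞` (i.e. the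
averages of `α⁻` are eventually bounded) and `(1/T)∫_t^{t+T} β⁺ → 0`, and if `ξ ≥ 0` is
absolutely continuous on `[0,∞)` (with a.e. derivative `ξ'`) satisfying
`dξ/dt + αξ ≤ β` a.e., then `ξ(t) → 0` as `t → ∞`. -/
theorem generalized_gronwall_lemma
    (T : ℝ) (hT : 0 < T) (α β ξ ξ' : ℝ → ℝ)
    (hαint : ∀ t > (0 : ℝ), IntervalIntegrable α volume 0 t)
    (hβint : ∀ t > (0 : ℝ), IntervalIntegrable β volume 0 t)
    (hξ'int : ∀ t > (0 : ℝ), IntervalIntegrable ξ' volume 0 t)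
    (hliminf : 0 < Filter.liminf (fun t => (1 / T) * ∫ τ in t..(t + T), α τ) atTop)
    (hlimsup : Filter.IsBoundedUnder (· ≤ ·) atTop
      (fun t => (1 / T) * ∫ τ in t..(t + T), max (-α τ) 0))
    (hβ : Tendsto (fun t => (1 / T) * ∫ τ in t..(t + T), max (β τ) 0) atTop (nhds 0))
    (hξ0 : ∀ t ∈ Set.Ici (0 : ℝ), 0 ≤ ξ t)
    (hξcont : ContinuousOn ξ (Set.Ici (0 : ℝ)))
    (hFTC : ∀ t ∈ Set.Ici (0 : ℝ), ξ t = ξ 0 + ∫ s in (0 : ℝ)..t, ξ' s)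
    (hineq : ∀ᵐ t ∂(volume.restrict (Set.Ici (0 : ℝ))), ξ' t + α t * ξ t ≤ β t) :
    Tendsto ξ atTop (nhds 0) := by
  have hα := loc_int hαint
  have hβi := loc_int hβint
  have hξ'i := loc_int hξ'int
  -- extract γ
  have hliminf' : 0 < sSup {a : ℝ | ∀ᶠ t in atTop,
      a ≤ (1 / T) * ∫ τ in t..(t + T), α τ} := by
    rwa [Filter.liminf_eq] at hliminf
  obtain ⟨γ, hγmem, hγpos⟩ : ∃ γ : ℝ,
      (∀ᶠ t in atTop, γ ≤ (1 / T) * ∫ τ in t..(t + T), α τ) ∧ 0 < γ := by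
    by_contra hcon
    push_neg at hcon
    have hle : sSup {a : ℝ | ∀ᶠ t in atTop, a ≤ (1 / T) * ∫ τ in t..(t + T), α τ} ≤ 0 :=
      Real.sSup_le (fun x hx => hcon x hx) le_rfl
    linarith
  -- extract M
  obtain ⟨M, hMev⟩ := hlimsup
  rw [Filter.eventually_map] at hMev
  -- extract t₀
  obtain ⟨t₀', ht₀'⟩ := Filter.eventually_atTop.1 (hγmem.and hMev)
  set t₀ : ℝ := max t₀' 0 with ht₀def
  have ht₀0 : (0:ℝ) ≤ t₀ := le_max_right _ _
  have hγwin : ∀ r, t₀ ≤ r → γ * T ≤ ∫ τ in r..(r+T), α τ := by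
    intro r hr
    have h := (ht₀' r ((le_max_left _ _).trans hr)).1
    have h2 : (1/T) * (∫ τ in r..(r+T), α τ) * T = ∫ τ in r..(r+T), α τ := by
      field_simp
    have h3 := mul_le_mul_of_nonneg_right h hT.le
    rwa [h2] at h3
  have hMwin : ∀ r, t₀ ≤ r → (∫ τ in r..(r+T), max (-α τ) 0) ≤ M * T := by
    intro r hr
    have h := (ht₀' r ((le_max_left _ _).trans hr)).2
    have h2 : (1/T) * (∫ τ in r..(r+T), max (-α τ) 0) * T
        = ∫ τ in r..(r+T), max (-α τ) 0 := by field_simp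
    have h3 := mul_le_mul_of_nonneg_right h hT.le
    rwa [h2] at h3
  -- constants
  set K : ℝ := Real.exp ((γ+M)*T) with hK
  have hKpos : 0 < K := Real.exp_pos _
  have hρpos : 0 < Real.exp (γ*T) - 1 := by
    have h1 : (1:ℝ) < Real.exp (γ*T) := by
      rw [← Real.exp_zero]
      exact Real.exp_lt_exp.2 (by positivity)
    linarith
  set D : ℝ := K * (T * Real.exp (2*γ*T) / (Real.exp (γ*T) - 1)) with hD
  have hDpos : 0 < D :=
    mul_pos hKpos (div_pos (mul_pos hT (Real.exp_pos _)) hρpos)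
  rw [Metric.tendsto_atTop]
  intro ε' hε'
  set ε : ℝ := ε' / (2*(D+1)) with hεdef
  have hεpos : 0 < ε := div_pos hε' (by linarith)
  -- extract t₁
  have hβev : ∀ᶠ t in atTop, (1 / T) * (∫ τ in t..(t+T), max (β τ) 0) < ε :=
    hβ.eventually_lt_const hεpos
  obtain ⟨t₁', ht₁'⟩ := Filter.eventually_atTop.1 hβev
  set t₁ : ℝ := max t₁' t₀ with ht₁def
  have ht₁t₀ : t₀ ≤ t₁ := le_max_right _ _
  have ht₁0 : (0:ℝ) ≤ t₁ := ht₀0.trans ht₁t₀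
  have hβwin : ∀ r, t₁ ≤ r → (∫ τ in r..(r+T), max (β τ) 0) ≤ ε*T := by
    intro r hr
    have h := (ht₁' r ((le_max_left _ _).trans hr)).le
    have h2 : (1/T) * (∫ τ in r..(r+T), max (β τ) 0) * T
        = ∫ τ in r..(r+T), max (β τ) 0 := by field_simp
    have h3 := mul_le_mul_of_nonneg_right h hT.le
    rwa [h2] at h3
  -- decay of the first term
  have hdecay0 : Tendsto (fun t : ℝ => ξ t₁ * K * Real.exp (-γ*(t - t₁)))
      atTop (nhds 0) := by
    have h0 : Tendsto (fun t : ℝ => t - t₁) atTop atTop :=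
      (tendsto_atTop_add_const_right atTop (-t₁) tendsto_id).congr
        (fun x => (sub_eq_add_neg x t₁).symm)
    have h1' : Tendsto (fun t : ℝ => γ * (t - t₁)) atTop atTop :=
      h0.const_mul_atTop hγpos
    have h1 : Tendsto (fun t : ℝ => -γ*(t - t₁)) atTop atBot :=
      (tendsto_neg_atTop_atBot.comp h1').congr (fun x => by simp [neg_mul])
    have h3 : Tendsto (fun t : ℝ => Real.exp (-γ*(t - t₁))) atTop (nhds 0) :=
      Real.tendsto_exp_atBot.comp h1
    have h4 := h3.const_mul (ξ t₁ * K)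
    rw [mul_zero] at h4
    exact h4
  have hfirst : ∀ᶠ t in atTop, ξ t₁ * K * Real.exp (-γ*(t - t₁)) < ε'/2 :=
    hdecay0.eventually_lt_const (by linarith)
  obtain ⟨t₂, ht₂⟩ := Filter.eventually_atTop.1 hfirst
  refine ⟨max t₂ t₁, fun t htt => ?_⟩
  have htt₁ : t₁ ≤ t := (le_max_right _ _).trans htt
  have htt₂ : t₂ ≤ t := (le_max_left _ _).trans htt
  have ht0 : (0:ℝ) ≤ t := ht₁0.trans htt₁
  -- decay estimate
  have hmain := decay_estimate hT hγpos ht₀0 hα hβi hξ'i hξ0 hFTC hineq hγwin hMwin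
    ht₁t₀ htt₁
  have hwindow := beta_window_bound hT hγpos ht₁0 (fun τ => le_max_right _ _)
    (fun a b ha hb => posPart_intervalIntegrable (hβi a b ha hb)) hβwin htt₁
  have hsecond : K * (∫ τ in t₁..t, (max (β τ) 0) * Real.exp (-γ*(t - τ))) ≤ ε * D := by
    calc K * (∫ τ in t₁..t, (max (β τ) 0) * Real.exp (-γ*(t - τ)))
        ≤ K * ((ε*T) * Real.exp (2*γ*T) / (Real.exp (γ*T) - 1)) :=
          mul_le_mul_of_nonneg_left hwindow hKpos.le
      _ = ε * D := by rw [hD]; ring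
  have hεD : ε * D ≤ ε'/2 := by
    have h1 : ε * (D+1) = ε'/2 := by
      rw [hεdef]
      field_simp
    nlinarith [hεpos]
  have hξt : ξ t < ε' := by
    have h5 := ht₂ t htt₂
    calc ξ t ≤ ξ t₁ * K * Real.exp (-γ*(t - t₁))
        + K * ∫ τ in t₁..t, (max (β τ) 0) * Real.exp (-γ*(t - τ)) := hmain
      _ ≤ ξ t₁ * K * Real.exp (-γ*(t - t₁)) + ε'/2 := by linarith [hsecond, hεD]
      _ < ε'/2 + ε'/2 := by linarith [h5]
      _ = ε' := by ring
  rw [Real.dist_0_eq_abs, abs_of_nonneg (hξ0 t ht0)]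
  exact hξt

end Sabra
end
end
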